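/- arXiv:2310.03597 — 11 statements merged into one kernel-verified Lean document; each statement's English description precedes it below -/
import Mathlib

section
/- Let f : (0,∞) → ℝ be continuously differentiable with f(1) = 0, and suppose there exists a function g : (0,∞) → ℝ such that f'(y) − f'(c·y) = g(c) for every y > 0 and every c > 0. Then there exist real constants a and b such that f(y) = a·y·log y + b·(y − 1) for all y > 0. -/
/-!
Fixing `c` and comparing with `y = 1` shows that `y ↦ f' y - f' 1` turns products into sums; being
continuous, it is a multiple of `log` (Cauchy's equation after the substitution `y = exp t`). Hence
`f' = a log + k`, whose antiderivatives on `(0, ∞)` vanishing at `1` are `a y log y + (k - a)(y - 1)`.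
-/

open Real Set

theorem eq_mul_log_of_map_mul {φ : ℝ → ℝ} (hφ : ContinuousOn φ (Ioi 0))
    (hmul : ∀ x, 0 < x → ∀ y, 0 < y → φ (x * y) = φ x + φ y) {x : ℝ} (hx : 0 < x) :
    φ x = φ (exp 1) * log x := by
  let ψ : ℝ →+ ℝ := AddMonoidHom.mk' (φ ∘ exp) fun s t => by
    simp only [Function.comp_apply, exp_add]
    exact hmul _ (exp_pos s) _ (exp_pos t)
  have hψ : Continuous ψ := hφ.comp_continuous continuous_exp exp_pos
  have hlin := map_real_smul ψ hψ (log x) 1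
  simp only [smul_eq_mul, mul_one] at hlin
  simpa [ψ, exp_log hx, mul_comm] using hlin

theorem eq_mul_log_add_const_of_sub_mul_eq {f' g : ℝ → ℝ} (hcont : ContinuousOn f' (Ioi 0))
    (hg : ∀ c, 0 < c → ∀ y, 0 < y → f' y - f' (c * y) = g c) {y : ℝ} (hy : 0 < y) :
    f' y = (f' (exp 1) - f' 1) * log y + f' 1 := by
  have hmul : ∀ c, 0 < c → ∀ y, 0 < y → f' (c * y) - f' 1 = (f' c - f' 1) + (f' y - f' 1) := by
    intro c hc y hy
    have hc1 := hg c hc 1 one_pos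
    rw [mul_one] at hc1
    linarith [hg c hc y hy]
  have := eq_mul_log_of_map_mul (φ := fun y => f' y - f' 1) (hcont.sub continuousOn_const) hmul hy
  linarith

theorem eq_mul_mul_log_add_of_hasDerivAt {f : ℝ → ℝ} {a k : ℝ}
    (hderiv : ∀ y, 0 < y → HasDerivAt f (a * log y + k) y) (hf1 : f 1 = 0) {y : ℝ} (hy : 0 < y) :
    f y = a * y * log y + (k - a) * (y - 1) := by
  let F : ℝ → ℝ := fun y => a * (y * log y) + (k - a) * (y - 1)
  have hF : ∀ y, 0 < y → HasDerivAt F (a * log y + k) y := fun y hy =>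
    (((hasDerivAt_mul_log hy.ne').const_mul a).add
      (((hasDerivAt_id y).sub_const 1).const_mul (k - a))).congr_deriv (by ring)
  have hdiff : ∀ {h : ℝ → ℝ}, (∀ y, 0 < y → HasDerivAt h (a * log y + k) y) →
      DifferentiableOn ℝ h (Ioi 0) :=
    fun h y hy => (h y hy).differentiableAt.differentiableWithinAt
  have hEq : EqOn f F (Ioi 0) :=
    isOpen_Ioi.eqOn_of_deriv_eq isPreconnected_Ioi (hdiff hderiv) (hdiff hF)
      (fun y hy => by rw [(hderiv y hy).deriv, (hF y hy).deriv]) (mem_Ioi.2 one_pos)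
      (by simp [F, hf1])
  rw [hEq hy, mul_assoc]

/-- Uniqueness of the KL generator among `f`-divergence generators: if `f` is
continuously differentiable on `(0, ∞)` with `f 1 = 0` and there is a function `g`
with `f' y − f' (c y) = g c` for all `y, c > 0`, then `f y = a y log y + b (y − 1)`
on `(0, ∞)` for some real constants `a, b`. -/
theorem kl_unique_among_f_divergences
    (f f' : ℝ → ℝ)
    (hderiv : ∀ y : ℝ, 0 < y → HasDerivAt f (f' y) y)
    (hcont : ContinuousOn f' (Set.Ioi (0 : ℝ)))
    (hf1 : f 1 = 0)
    (g : ℝ → ℝ)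
    (hg : ∀ c : ℝ, 0 < c → ∀ y : ℝ, 0 < y → f' y - f' (c * y) = g c) :
    ∃ a b : ℝ, ∀ y : ℝ, 0 < y → f y = a * y * Real.log y + b * (y - 1) := by
  have hderiv' : ∀ y, 0 < y → HasDerivAt f ((f' (exp 1) - f' 1) * log y + f' 1) y :=
    fun y hy => eq_mul_log_add_const_of_sub_mul_eq hcont hg hy ▸ hderiv y hy
  exact ⟨_, _, fun y hy => eq_mul_mul_log_add_of_hasDerivAt hderiv' hf1 hy⟩
end

section
/- Let A be an invertible real n×n matrix, b ∈ ℝ^n, φ(θ) = Aθ + b. Let π : ℝ^n → (0,∞) be differentiable and let ρ : ℝ × ℝ^n → (0,∞) be differentiable in t and (for each t) twice differentiable in θ. Let Q, Q̃ : ℝ × ℝ^n → ℝ^{n×n} be matrix fields satisfying Q̃(t, φ(θ)) = A·Q(t, θ)·Aᵀ for all t and θ. Define the pushforward densities π̃(x) = π(A⁻¹(x−b))·|det A|⁻¹ and ρ̃(t, x) = ρ(t, A⁻¹(x−b))·|det A|⁻¹. Assume that for each t the vector field V_t(θ) = ρ(t,θ)·Q(t,θ)·(∇_θ log ρ(t,θ)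 − ∇_θ log π(θ)) is differentiable in θ and that the gradient-flow equation ∂_t ρ(t,θ) = div_θ V_t(θ) holds for all (t,θ). Then the transformed vector field Ṽ_t(x) = ρ̃(t,x)·Q̃(t,x)·(∇_x log ρ̃(t,x) − ∇_x log π̃(x)) satisfies Ṽ_t(φ(θ)) = |det A|⁻¹·A·V_t(θ) for all (t,θ), is differentiable in x, and ∂_t ρ̃(t,x) = div_x Ṽ_t(x) for all (t,x). -/
open Matrix

/-- The Euclidean gradient of `f : ℝ^n → ℝ`, as the vector of partial derivatives. -/
noncomputable def grad {n : ℕ} (f : (Fin n → ℝ) → ℝ) (θ : Fin n → ℝ) : Fin n → ℝ :=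
  fun i => fderiv ℝ f θ (Pi.single i 1)

/-- The divergence `div g = ∑ i ∂gᵢ/∂θᵢ` of a vector field `g : ℝ^n → ℝ^n`. -/
noncomputable def diverg {n : ℕ} (g : (Fin n → ℝ) → Fin n → ℝ) (θ : Fin n → ℝ) : ℝ :=
  ∑ i, fderiv ℝ g θ (Pi.single i 1) i

lemma clm_sum_single {n : ℕ} {F : Type*} [NormedAddCommGroup F] [NormedSpace ℝ F]
    (J : (Fin n → ℝ) →L[ℝ] F) (v : Fin n → ℝ) :
    J v = ∑ j, v j • J (Pi.single j 1) := by
  have hv : v = ∑ j, v j • (Pi.single j 1 : Fin n → ℝ) := by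
    funext k
    simp [Finset.sum_apply, Pi.single_apply]
  conv_lhs => rw [hv]
  rw [map_sum]
  simp

noncomputable def mvL {n : ℕ} (M : Matrix (Fin n) (Fin n) ℝ) : (Fin n → ℝ) →L[ℝ] (Fin n → ℝ) :=
  LinearMap.toContinuousLinearMap M.mulVecLin

lemma mvL_apply {n : ℕ} (M : Matrix (Fin n) (Fin n) ℝ) (v : Fin n → ℝ) : mvL M v = M.mulVec v := by
  simp [mvL]

lemma hasFDerivAt_psi {n : ℕ} (A : Matrix (Fin n) (Fin n) ℝ) (b : Fin n → ℝ) (x : Fin n → ℝ) :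
    HasFDerivAt (fun y => A⁻¹.mulVec (y - b)) (mvL A⁻¹) x := by
  have h1 : (fun y : Fin n → ℝ => A⁻¹.mulVec (y - b)) = fun y => mvL A⁻¹ y - A⁻¹.mulVec b := by
    funext y; simp [mvL_apply, Matrix.mulVec_sub]
  rw [h1]
  exact ((mvL A⁻¹).hasFDerivAt).sub_const _

lemma fderiv_apply_mulVec_single {n : ℕ} (f : (Fin n → ℝ) → ℝ) (y : Fin n → ℝ)
    (M : Matrix (Fin n) (Fin n) ℝ) (i : Fin n) :
    fderiv ℝ f y (M.mulVec (Pi.single i 1)) = (Mᵀ.mulVec (grad f y)) i := by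
  rw [clm_sum_single]
  simp only [Matrix.mulVec, dotProduct, Matrix.transpose_apply, grad, smul_eq_mul]
  congr 1
  funext j
  simp [Pi.single_apply, Finset.sum_ite_eq, mul_comm]

lemma grad_comp_affine {n : ℕ} (A : Matrix (Fin n) (Fin n) ℝ) (b : Fin n → ℝ)
    (f : (Fin n → ℝ) → ℝ) (x : Fin n → ℝ)
    (hf : DifferentiableAt ℝ f (A⁻¹.mulVec (x - b))) :
    grad (fun y => f (A⁻¹.mulVec (y - b))) x
      = (A⁻¹)ᵀ.mulVec (grad f (A⁻¹.mulVec (x - b))) := by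
  have hcomp := hf.hasFDerivAt.comp x (hasFDerivAt_psi A b x)
  funext i
  have : grad (fun y => f (A⁻¹.mulVec (y - b))) x i
      = fderiv ℝ f (A⁻¹.mulVec (x - b)) (A⁻¹.mulVec (Pi.single i 1)) := by
    rw [grad]
    rw [show (fun y => f (A⁻¹.mulVec (y - b))) = (f ∘ fun y => A⁻¹.mulVec (y - b)) from rfl,
      hcomp.fderiv]
    simp [mvL_apply]
  rw [this, fderiv_apply_mulVec_single]

lemma grad_log_pushforward {n : ℕ} (A : Matrix (Fin n) (Fin n) ℝ) (b : Fin n → ℝ)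
    (f fA : (Fin n → ℝ) → ℝ) (hf : Differentiable ℝ f) (hfpos : ∀ y, 0 < f y)
    (c : ℝ) (hc : c ≠ 0) (hfA : ∀ y, fA y = f (A⁻¹.mulVec (y - b)) * c) (x : Fin n → ℝ) :
    grad (fun y => Real.log (fA y)) x
      = (A⁻¹)ᵀ.mulVec (grad (fun y => Real.log (f y)) (A⁻¹.mulVec (x - b))) := by
  have h1 : (fun y => Real.log (fA y))
      = fun y => Real.log (f (A⁻¹.mulVec (y - b))) + Real.log c := by
    funext y
    rw [hfA, Real.log_mul (ne_of_gt (hfpos _)) hc]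
  rw [h1]
  have h2 : grad (fun y => Real.log (f (A⁻¹.mulVec (y - b))) + Real.log c) x
      = grad (fun y => Real.log (f (A⁻¹.mulVec (y - b)))) x := by
    funext i
    simp [grad, fderiv_add_const]
  rw [h2]
  exact grad_comp_affine A b (fun y => Real.log (f y)) x
    ((hf _).log (ne_of_gt (hfpos _)))

lemma clm_eq_mulVec {n : ℕ} (J : (Fin n → ℝ) →L[ℝ] (Fin n → ℝ)) (v : Fin n → ℝ) :
    J v = (Matrix.of fun k j => J (Pi.single j 1) k).mulVec v := by
  rw [clm_sum_single]
  funext k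
  simp [Matrix.mulVec, dotProduct, Finset.sum_apply, mul_comm]

/-- Affine invariance of the preconditioned Wasserstein gradient flow
`∂_t ρ = ∇·(ρ Q (∇log ρ − ∇log p))`: if the preconditioner satisfies
`Q̃(t, Aθ+b) = A Q(t,θ) Aᵀ`, then the pushforward densities
`ρ̃(t,x) = ρ(t, A⁻¹(x−b)) |det A|⁻¹`, `p̃(x) = p(A⁻¹(x−b)) |det A|⁻¹`
satisfy the same equation with preconditioner `Q̃`, the transformed flux field
satisfying `Ṽ_t(Aθ+b) = |det A|⁻¹ A V_t(θ)`. -/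
theorem preconditioned_wasserstein_flow_affine_invariant
    (n : ℕ) (A : Matrix (Fin n) (Fin n) ℝ) (hA : IsUnit A.det) (b : Fin n → ℝ)
    (p : (Fin n → ℝ) → ℝ) (ρ : ℝ → (Fin n → ℝ) → ℝ)
    (hppos : ∀ x, 0 < p x) (hρpos : ∀ t x, 0 < ρ t x)
    (hpdiff : Differentiable ℝ p)
    (hρt : ∀ θ, ∀ t : ℝ, DifferentiableAt ℝ (fun s => ρ s θ) t)
    (hρθ : ∀ t : ℝ, ContDiff ℝ 2 (ρ t))
    (Q QA : ℝ → (Fin n → ℝ) → Matrix (Fin n) (Fin n) ℝ)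
    (hQ : ∀ t θ, QA t (A.mulVec θ + b) = A * Q t θ * Aᵀ)
    (pA : (Fin n → ℝ) → ℝ)
    (hpA : ∀ x, pA x = p (A⁻¹.mulVec (x - b)) * |A.det|⁻¹)
    (ρA : ℝ → (Fin n → ℝ) → ℝ)
    (hρA : ∀ t x, ρA t x = ρ t (A⁻¹.mulVec (x - b)) * |A.det|⁻¹)
    (V : ℝ → (Fin n → ℝ) → Fin n → ℝ)
    (hV : ∀ t θ, V t θ = ρ t θ • (Q t θ).mulVec
        (grad (fun y => Real.log (ρ t y)) θ - grad (fun y => Real.log (p y)) θ))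
    (hVdiff : ∀ t : ℝ, Differentiable ℝ (V t))
    (hflow : ∀ t θ, HasDerivAt (fun s => ρ s θ) (diverg (V t) θ) t)
    (VA : ℝ → (Fin n → ℝ) → Fin n → ℝ)
    (hVA : ∀ t x, VA t x = ρA t x • (QA t x).mulVec
        (grad (fun y => Real.log (ρA t y)) x - grad (fun y => Real.log (pA y)) x)) :
    (∀ t θ, VA t (A.mulVec θ + b) = |A.det|⁻¹ • A.mulVec (V t θ)) ∧
    (∀ t : ℝ, Differentiable ℝ (VA t)) ∧
    (∀ t x, HasDerivAt (fun s => ρA s x) (diverg (VA t) x) t) := by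
  have hdet : A.det ≠ 0 := hA.ne_zero
  set c : ℝ := |A.det|⁻¹ with hc
  have hcne : c ≠ 0 := inv_ne_zero (abs_ne_zero.mpr hdet)
  have hψφ : ∀ θ : Fin n → ℝ, A⁻¹.mulVec (A.mulVec θ + b - b) = θ := by
    intro θ
    rw [add_sub_cancel_right, Matrix.mulVec_mulVec, Matrix.nonsing_inv_mul A hA,
      Matrix.one_mulVec]
  have hφψ : ∀ x : Fin n → ℝ, A.mulVec (A⁻¹.mulVec (x - b)) + b = x := by
    intro x
    rw [Matrix.mulVec_mulVec, Matrix.mul_nonsing_inv A hA, Matrix.one_mulVec, sub_add_cancel]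
  -- Part 1
  have part1 : ∀ t θ, VA t (A.mulVec θ + b) = c • A.mulVec (V t θ) := by
    intro t θ
    rw [hVA, hV]
    have hxθ : A⁻¹.mulVec (A.mulVec θ + b - b) = θ := hψφ θ
    have hgρ : grad (fun y => Real.log (ρA t y)) (A.mulVec θ + b)
        = (A⁻¹)ᵀ.mulVec (grad (fun y => Real.log (ρ t y)) θ) := by
      rw [grad_log_pushforward A b (ρ t) (ρA t) ((hρθ t).differentiable two_ne_zero)
        (hρpos t) c hcne (hρA t) (A.mulVec θ + b), hxθ]
    have hgp : grad (fun y => Real.log (pA y)) (A.mulVec θ + b)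
        = (A⁻¹)ᵀ.mulVec (grad (fun y => Real.log (p y)) θ) := by
      rw [grad_log_pushforward A b p pA hpdiff hppos c hcne hpA (A.mulVec θ + b), hxθ]
    rw [hgρ, hgp, hρA t (A.mulVec θ + b), hxθ, hQ t θ, ← Matrix.mulVec_sub,
      Matrix.mulVec_mulVec]
    have hAT : A * Q t θ * Aᵀ * (A⁻¹)ᵀ = A * Q t θ := by
      rw [mul_assoc (A * Q t θ), ← Matrix.transpose_mul, Matrix.nonsing_inv_mul A hA,
        Matrix.transpose_one, mul_one]
    rw [hAT, Matrix.mulVec_smul, ← Matrix.mulVec_mulVec, smul_smul, mul_comm (ρ t θ) c]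
  -- pointwise description of VA
  have key : ∀ t x, VA t x = c • A.mulVec (V t (A⁻¹.mulVec (x - b))) := by
    intro t x
    have h := part1 t (A⁻¹.mulVec (x - b))
    rw [hφψ x] at h
    exact h
  -- derivative of VA
  have hVAderiv : ∀ t x, HasFDerivAt (VA t)
      (c • ((mvL A).comp ((fderiv ℝ (V t) (A⁻¹.mulVec (x - b))).comp (mvL A⁻¹)))) x := by
    intro t x
    have h1 := ((hVdiff t (A⁻¹.mulVec (x - b))).hasFDerivAt).comp x (hasFDerivAt_psi A b x)
    have h2 := ((mvL A).hasFDerivAt).comp x h1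
    have h3 := h2.const_smul c
    have heq : VA t = fun y => c • (⇑(mvL A) ∘ (V t ∘ fun y => A⁻¹.mulVec (y - b))) y := by
      funext y
      rw [key t y]
      simp [mvL_apply, Function.comp]
    rw [heq]
    exact h3
  have hdiff : ∀ t : ℝ, Differentiable ℝ (VA t) := fun t x => (hVAderiv t x).differentiableAt
  -- divergence identity
  have hdiv : ∀ t x, diverg (VA t) x = c * diverg (V t) (A⁻¹.mulVec (x - b)) := by
    intro t x
    set θ := A⁻¹.mulVec (x - b) with hθ
    set J := fderiv ℝ (V t) θ with hJ
    set M := Matrix.of (fun k j => J (Pi.single j 1) k) with hM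
    have hf : fderiv ℝ (VA t) x = c • ((mvL A).comp (J.comp (mvL A⁻¹))) :=
      (hVAderiv t x).fderiv
    rw [diverg, hf]
    simp only [ContinuousLinearMap.coe_smul', Pi.smul_apply, ContinuousLinearMap.coe_comp',
      Function.comp_apply, smul_eq_mul, mvL_apply]
    rw [← Finset.mul_sum]
    congr 1
    have hterm : ∀ i : Fin n, (A.mulVec (J (A⁻¹.mulVec (Pi.single i 1)))) i
        = (A * M * A⁻¹) i i := by
      intro i
      rw [clm_eq_mulVec J, ← hM, Matrix.mulVec_mulVec, Matrix.mulVec_mulVec]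
      simp [Matrix.mulVec, dotProduct, Pi.single_apply]
    rw [Finset.sum_congr rfl (fun i _ => hterm i)]
    have htr : ∑ i, (A * M * A⁻¹) i i = (A * M * A⁻¹).trace := by
      simp [Matrix.trace, Matrix.diag]
    rw [htr, Matrix.trace_mul_cycle, Matrix.nonsing_inv_mul A hA, one_mul]
    simp [Matrix.trace, Matrix.diag, diverg, hM, ← hJ]
  refine ⟨part1, hdiff, ?_⟩
  intro t x
  have h := (hflow t (A⁻¹.mulVec (x - b))).mul_const c
  have heq : (fun s => ρ s (A⁻¹.mulVec (x - b)) * c) = fun s => ρA s x :=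
    funext fun s => (hρA s x).symm
  rw [heq] at h
  have hd : diverg (VA t) x = diverg (V t) (A⁻¹.mulVec (x - b)) * c := by
    rw [hdiv t x]; ring
  rw [hd]
  exact h
end

section
/- Let A be an invertible real n×n matrix, b ∈ ℝ^n, φ(θ) = Aθ + b. Let ρ, π : ℝ^n → (0,∞) be differentiable and define the pushforward densities ρ̃(x) = ρ(A⁻¹(x−b))·|det A|⁻¹ and π̃(x) = π(A⁻¹(x−b))·|det A|⁻¹. Let Q, Q̃ : ℝ^n → ℝ^{n×n} satisfy Q̃(φ(θ)) = A·Q(θ)·Aᵀ for all θ, and let H, H̃ : ℝ^n → ℝ^{n×n} be differentiable with H̃(φ(θ)) = A·H(θ) for all θ. Set D(θ) = ½·H(θ)·H(θ)ᵀ, D̃(x) = ½·H̃(x)·H̃(x)ᵀ, d(θ)ᵢ = ∑ⱼ ∂_{θⱼ} D(θ)ᵢⱼ, d̃(x)ᵢ = ∑ⱼ ∂_{xⱼ} D̃(x)ᵢⱼ, and define the drifts F(θ) = Q(θ)·∇log π(θ) + (D(θ) − Q(θ))·∇log ρ(θ) − d(θ) and F̃(x) = Q̃(x)·∇log π̃(x)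 + (D̃(x) − Q̃(x))·∇log ρ̃(x) − d̃(x). Then A·F(θ) = F̃(φ(θ)) for all θ ∈ ℝ^n. -/
open Matrix

lemma clm_expand {n : ℕ} (L : (Fin n → ℝ) →L[ℝ] ℝ) (v : Fin n → ℝ) :
    L v = ∑ i, v i * L (Pi.single i 1) := by
  have hv : v = ∑ i, v i • (Pi.single i 1 : Fin n → ℝ) := by
    funext j
    simp [Finset.sum_apply, Pi.single_apply]
  conv_lhs => rw [hv]
  rw [map_sum]
  simp

lemma fderiv_comp_affine {n : ℕ} (A : Matrix (Fin n) (Fin n) ℝ) (b : Fin n → ℝ)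
    (f : (Fin n → ℝ) → ℝ) (hf : Differentiable ℝ f) (x v : Fin n → ℝ) :
    fderiv ℝ (fun y => f (A.mulVec (y - b))) x v
      = fderiv ℝ f (A.mulVec (x - b)) (A.mulVec v) := by
  set L : (Fin n → ℝ) →L[ℝ] (Fin n → ℝ) :=
    LinearMap.toContinuousLinearMap (Matrix.mulVecLin A) with hL
  have hψ : HasFDerivAt (fun y : Fin n → ℝ => A.mulVec (y - b)) L x := by
    have h1 : (fun y : Fin n → ℝ => A.mulVec (y - b)) = fun y => L y - L b := by
      funext y
      simp [hL, Matrix.mulVec_sub]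
    rw [h1]
    exact L.hasFDerivAt.sub_const (L b)
  have hc : HasFDerivAt (fun y : Fin n → ℝ => f (A.mulVec (y - b)))
      ((fderiv ℝ f (A.mulVec (x - b))).comp L) x :=
    (hf (A.mulVec (x - b))).hasFDerivAt.comp x hψ
  rw [hc.fderiv]
  simp [hL]

lemma diff_comp_affine {n : ℕ} (A : Matrix (Fin n) (Fin n) ℝ) (b : Fin n → ℝ)
    (f : (Fin n → ℝ) → ℝ) (hf : Differentiable ℝ f) :
    Differentiable ℝ (fun y => f (A.mulVec (y - b))) := by
  have h1 : Differentiable ℝ (fun y : Fin n → ℝ => A.mulVec (y - b)) := by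
    have := (LinearMap.toContinuousLinearMap (Matrix.mulVecLin A)).differentiable
    exact this.comp (differentiable_id.sub_const b)
  exact hf.comp h1

/-- Affine invariance of the mean-field drift
`F = Q ∇log p + (D − Q) ∇log ρ − d`, `D = ½ H Hᵀ`, `dᵢ = ∑ⱼ ∂ⱼ Dᵢⱼ`, of the SDE
simulating the preconditioned Wasserstein gradient flow: if
`Q̃(Aθ+b) = A Q(θ) Aᵀ` and `H̃(Aθ+b) = A H(θ)`, then `A F(θ) = F̃(Aθ+b)`. -/
theorem wasserstein_meanfield_drift_affine_invariant
    (n : ℕ) (A : Matrix (Fin n) (Fin n) ℝ) (hA : IsUnit A.det) (b : Fin n → ℝ)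
    (ρ p : (Fin n → ℝ) → ℝ)
    (hρpos : ∀ θ, 0 < ρ θ) (hppos : ∀ θ, 0 < p θ)
    (hρdiff : Differentiable ℝ ρ) (hpdiff : Differentiable ℝ p)
    (ρA pA : (Fin n → ℝ) → ℝ)
    (hρA : ∀ x, ρA x = ρ (A⁻¹.mulVec (x - b)) * |A.det|⁻¹)
    (hpA : ∀ x, pA x = p (A⁻¹.mulVec (x - b)) * |A.det|⁻¹)
    (Q QA : (Fin n → ℝ) → Matrix (Fin n) (Fin n) ℝ)
    (hQ : ∀ θ, QA (A.mulVec θ + b) = A * Q θ * Aᵀ)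
    (H HA : (Fin n → ℝ) → Matrix (Fin n) (Fin n) ℝ)
    (hHdiff : ∀ i j, Differentiable ℝ fun θ => H θ i j)
    (hHAdiff : ∀ i j, Differentiable ℝ fun x => HA x i j)
    (hH : ∀ θ, HA (A.mulVec θ + b) = A * H θ)
    (D DA : (Fin n → ℝ) → Matrix (Fin n) (Fin n) ℝ)
    (hD : ∀ θ, D θ = (1 / 2 : ℝ) • (H θ * (H θ)ᵀ))
    (hDA : ∀ x, DA x = (1 / 2 : ℝ) • (HA x * (HA x)ᵀ))
    (dv dvA : (Fin n → ℝ) → Fin n → ℝ)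
    (hdv : ∀ θ i, dv θ i = ∑ j, fderiv ℝ (fun y => D y i j) θ (Pi.single j 1))
    (hdvA : ∀ x i, dvA x i = ∑ j, fderiv ℝ (fun y => DA y i j) x (Pi.single j 1))
    (F FA : (Fin n → ℝ) → Fin n → ℝ)
    (hF : ∀ θ, F θ = (Q θ).mulVec (grad (fun y => Real.log (p y)) θ)
        + (D θ - Q θ).mulVec (grad (fun y => Real.log (ρ y)) θ) - dv θ)
    (hFA : ∀ x, FA x = (QA x).mulVec (grad (fun y => Real.log (pA y)) x)
        + (DA x - QA x).mulVec (grad (fun y => Real.log (ρA y)) x) - dvA x) :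
    ∀ θ, A.mulVec (F θ) = FA (A.mulVec θ + b) := by

  intro θ
  have hdet : A.det ≠ 0 := by simpa [isUnit_iff_ne_zero] using hA
  have hinv : A⁻¹ * A = 1 := Matrix.nonsing_inv_mul A hA
  have hinv' : A * A⁻¹ = 1 := Matrix.mul_nonsing_inv A hA
  set x : Fin n → ℝ := A.mulVec θ + b with hx
  have hψx : A⁻¹.mulVec (x - b) = θ := by
    simp [hx, Matrix.mulVec_mulVec, hinv]
  have hsurj : ∀ z : Fin n → ℝ, A.mulVec (A⁻¹.mulVec (z - b)) + b = z := by
    intro z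
    simp [Matrix.mulVec_mulVec, hinv']
  -- gradient transformation for log densities
  have key : ∀ (f fA : (Fin n → ℝ) → ℝ), (∀ y, 0 < f y) → Differentiable ℝ f →
      (∀ z, fA z = f (A⁻¹.mulVec (z - b)) * |A.det|⁻¹) →
      grad (fun y => Real.log (fA y)) x
        = (A⁻¹)ᵀ.mulVec (grad (fun y => Real.log (f y)) θ) := by
    intro f fA hpos hdiff hfA
    have hcne : |A.det|⁻¹ ≠ 0 := by positivity
    have heq : (fun y => Real.log (fA y))
        = fun y => Real.log (f (A⁻¹.mulVec (y - b))) + Real.log |A.det|⁻¹ := by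
      funext y
      rw [hfA, Real.log_mul (hpos _).ne' hcne]
    have hlog : Differentiable ℝ (fun y => Real.log (f y)) :=
      hdiff.log (fun y => (hpos y).ne')
    funext j
    simp only [grad, heq]
    rw [fderiv_add_const]
    rw [fderiv_comp_affine A⁻¹ b _ hlog x (Pi.single j 1), hψx]
    rw [clm_expand]
    simp [Matrix.mulVec, dotProduct, Pi.single_apply, mul_ite, grad,
      Matrix.transpose_apply]
  set gp : Fin n → ℝ := grad (fun y => Real.log (p y)) θ with hgp
  set gρ : Fin n → ℝ := grad (fun y => Real.log (ρ y)) θ with hgρ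
  have hgradp : grad (fun y => Real.log (pA y)) x = (A⁻¹)ᵀ.mulVec gp :=
    key p pA hppos hpdiff hpA
  have hgradρ : grad (fun y => Real.log (ρA y)) x = (A⁻¹)ᵀ.mulVec gρ :=
    key ρ ρA hρpos hρdiff hρA
  -- DA in terms of D
  have hHall : ∀ z, HA z = A * H (A⁻¹.mulVec (z - b)) := by
    intro z
    have := hH (A⁻¹.mulVec (z - b))
    rwa [hsurj z] at this
  have hDAform : ∀ z, DA z = A * D (A⁻¹.mulVec (z - b)) * Aᵀ := by
    intro z
    rw [hDA, hHall z, hD]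
    simp only [Matrix.transpose_mul, Matrix.mul_smul, Matrix.smul_mul,
      Matrix.mul_assoc]
  have hDAx : DA x = A * D θ * Aᵀ := by rw [hDAform x, hψx]
  have hQAx : QA x = A * Q θ * Aᵀ := hQ θ
  -- differentiability of entries of D
  have hDdiff : ∀ k l, Differentiable ℝ (fun y => D y k l) := by
    intro k l
    have hform : (fun y => D y k l) = fun y => (1 / 2 : ℝ) * ∑ s, H y k s * H y l s := by
      funext y
      rw [hD]
      simp [Matrix.mul_apply]
    rw [hform]
    exact ((Differentiable.fun_sum fun s _ => (hHdiff k s).mul (hHdiff l s)).const_mul _)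
  have hψdiff : ∀ k l, Differentiable ℝ (fun y => D (A⁻¹.mulVec (y - b)) k l) :=
    fun k l => diff_comp_affine A⁻¹ b _ (hDdiff k l)
  -- abbreviate the partials of D at θ
  set gd : Fin n → Fin n → Fin n → ℝ :=
    fun k l r => fderiv ℝ (fun y => D y k l) θ (Pi.single r 1) with hgd
  -- entrywise formula for DA
  have hDAentry : ∀ i j : Fin n, (fun y => DA y i j)
      = fun y => ∑ l, ∑ k, (A i k * A j l) * D (A⁻¹.mulVec (y - b)) k l := by
    intro i j
    funext y
    rw [hDAform y]
    simp only [Matrix.mul_apply, Matrix.transpose_apply, Finset.sum_mul]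
    refine Finset.sum_congr rfl fun l _ => Finset.sum_congr rfl fun k _ => by ring
  have hterm : ∀ i j : Fin n, fderiv ℝ (fun y => DA y i j) x (Pi.single j 1)
      = ∑ l, ∑ k, (A i k * A j l) * ∑ r, A⁻¹ r j * gd k l r := by
    intro i j
    rw [hDAentry i j]
    rw [fderiv_fun_sum (fun l _ => by
      exact (Differentiable.fun_sum fun k _ =>
        ((hψdiff k l).const_mul _)).differentiableAt)]
    rw [ContinuousLinearMap.sum_apply]
    refine Finset.sum_congr rfl fun l _ => ?_
    rw [fderiv_fun_sum (fun k _ => ((hψdiff k l).const_mul _).differentiableAt)]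
    rw [ContinuousLinearMap.sum_apply]
    refine Finset.sum_congr rfl fun k _ => ?_
    rw [fderiv_const_mul (hψdiff k l x)]
    rw [ContinuousLinearMap.smul_apply, smul_eq_mul]
    congr 1
    rw [fderiv_comp_affine A⁻¹ b _ (hDdiff k l) x (Pi.single j 1), hψx]
    rw [clm_expand]
    refine Finset.sum_congr rfl fun r _ => ?_
    congr 1
    simp [Matrix.mulVec, dotProduct, Pi.single_apply, mul_ite]
  -- divergence transformation
  have hdvax : dvA x = A.mulVec (dv θ) := by
    funext i
    rw [hdvA]
    calc ∑ j, fderiv ℝ (fun y => DA y i j) x (Pi.single j 1)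
        = ∑ j, ∑ l, ∑ k, ∑ r, (A i k * gd k l r) * (A⁻¹ r j * A j l) := by
          refine Finset.sum_congr rfl fun j _ => ?_
          rw [hterm i j]
          refine Finset.sum_congr rfl fun l _ => Finset.sum_congr rfl fun k _ => ?_
          rw [Finset.mul_sum]
          refine Finset.sum_congr rfl fun r _ => by ring
      _ = ∑ l, ∑ k, ∑ r, (A i k * gd k l r) * ∑ j, A⁻¹ r j * A j l := by
          rw [Finset.sum_comm]
          refine Finset.sum_congr rfl fun l _ => ?_
          rw [Finset.sum_comm]
          refine Finset.sum_congr rfl fun k _ => ?_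
          rw [Finset.sum_comm]
          refine Finset.sum_congr rfl fun r _ => ?_
          rw [Finset.mul_sum]
      _ = ∑ l, ∑ k, ∑ r, (A i k * gd k l r) * (if r = l then (1:ℝ) else 0) := by
          refine Finset.sum_congr rfl fun l _ => Finset.sum_congr rfl fun k _ =>
            Finset.sum_congr rfl fun r _ => ?_
          congr 1
          have : (∑ j, A⁻¹ r j * A j l) = (A⁻¹ * A) r l := by
            rw [Matrix.mul_apply]
          rw [this, hinv, Matrix.one_apply]
      _ = ∑ l, ∑ k, A i k * gd k l l := by
          refine Finset.sum_congr rfl fun l _ => Finset.sum_congr rfl fun k _ => ?_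
          simp
      _ = A.mulVec (dv θ) i := by
          rw [Finset.sum_comm]
          simp only [Matrix.mulVec, dotProduct]
          refine Finset.sum_congr rfl fun k _ => ?_
          rw [hdv, Finset.mul_sum]
  -- matrix identities
  have hAtinv : Aᵀ * (A⁻¹)ᵀ = 1 := by
    rw [← Matrix.transpose_mul, hinv, Matrix.transpose_one]
  have hQpart : (QA x).mulVec (grad (fun y => Real.log (pA y)) x)
      = A.mulVec ((Q θ).mulVec gp) := by
    rw [hgradp, hQAx, Matrix.mulVec_mulVec, Matrix.mul_assoc (A * Q θ), hAtinv,
      Matrix.mul_one, ← Matrix.mulVec_mulVec]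
  have hDQpart : (DA x - QA x).mulVec (grad (fun y => Real.log (ρA y)) x)
      = A.mulVec ((D θ - Q θ).mulVec gρ) := by
    have hsub : DA x - QA x = A * (D θ - Q θ) * Aᵀ := by
      rw [hDAx, hQAx, Matrix.mul_sub, Matrix.sub_mul]
    rw [hgradρ, hsub, Matrix.mulVec_mulVec, Matrix.mul_assoc (A * (D θ - Q θ)), hAtinv,
      Matrix.mul_one, ← Matrix.mulVec_mulVec]
  rw [hFA, hF, hQpart, hDQpart, hdvax]
  rw [Matrix.mulVec_sub, Matrix.mulVec_add]
end

section
/- Let A be an invertible real n×n matrix, b ∈ ℝ^n, φ(θ) = Aθ + b. Let π : ℝ^n → (0,∞) be differentiable and ρ : ℝ × ℝ^n → (0,∞) be differentiable in t and in θ. Let k, k̃ : ℝ × ℝ^n × ℝ^n → ℝ and Q, Q̃ : ℝ × ℝ^n × ℝ^n → ℝ^{n×n} satisfy k̃(t, φ(θ), φ(θ'))·Q̃(t, φ(θ), φ(θ')) = k(t, θ, θ')·A·Q(t, θ, θ')·Aᵀ for all t, θ, θ'. Define the pushforward densities ρ̃(t,x) = ρ(t, A⁻¹(x−b))·|det A|⁻¹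 and π̃(x) = π(A⁻¹(x−b))·|det A|⁻¹. Assume that for each (t,θ) the function θ' ↦ k(t,θ,θ')·Q(t,θ,θ')·(∇log ρ(t,θ') − ∇log π(θ'))·ρ(t,θ') is Lebesgue-integrable, that the vector field V_t(θ) = ρ(t,θ)·∫ k(t,θ,θ')·Q(t,θ,θ')·(∇_{θ'}log ρ(t,θ') − ∇_{θ'}log π(θ'))·ρ(t,θ') dθ' is differentiable in θ, and that ∂_t ρ(t,θ) = div_θ V_t(θ) for all (t,θ). Then Ṽ_t(x) = ρ̃(t,x)·∫ k̃(t,x,x')·Q̃(t,x,x')·(∇log ρ̃(t,x') − ∇log π̃(x'))·ρ̃(t,x') dx' satisfies Ṽ_t(φ(θ)) = |det A|⁻¹·A·V_t(θ), is differentiable in x, and ∂_t ρ̃(t,x) = div_x Ṽ_t(x) for all (t,x). -/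
open Matrix MeasureTheory

/-!
Under `φ(θ) = Aθ + b` the pushforward density picks up the factor `|det A|⁻¹`, and the gradient
of a log-density transforms covariantly: `∇ log ρ̃ (φ θ) = A⁻ᵀ ∇ log ρ(θ)`, the constant
`log |det A|⁻¹` having no gradient. The kernel–preconditioner condition turns `k̃ Q̃ A⁻ᵀ` into
`k A Q`, so substituting `x' = φ θ'` in the flux integral gives `Ṽ_t ∘ φ = |det A|⁻¹ A V_t`.
The divergence is the trace of the Jacobian, and the Jacobian of `Ṽ_t` is `|det A|⁻¹` times the
conjugate by `A` of that of `V_t`, so `div Ṽ_t ∘ φ = |det A|⁻¹ div V_t = ∂_t ρ̃ ∘ φ`.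
-/

variable {n : ℕ}

noncomputable def Matrix.toContinuousLinearEquivOfIsUnitDet (A : Matrix (Fin n) (Fin n) ℝ)
    (hA : IsUnit A.det) : (Fin n → ℝ) ≃L[ℝ] (Fin n → ℝ) :=
  (A.toLinearEquiv' (A.invertibleOfIsUnitDet hA)).toContinuousLinearEquiv

@[simp]
theorem Matrix.toContinuousLinearEquivOfIsUnitDet_apply (A : Matrix (Fin n) (Fin n) ℝ)
    (hA : IsUnit A.det) (x : Fin n → ℝ) : A.toContinuousLinearEquivOfIsUnitDet hA x = A *ᵥ x :=
  rfl

@[simp]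
theorem Matrix.toContinuousLinearEquivOfIsUnitDet_symm_apply (A : Matrix (Fin n) (Fin n) ℝ)
    (hA : IsUnit A.det) (x : Fin n → ℝ) :
    (A.toContinuousLinearEquivOfIsUnitDet hA).symm x = A⁻¹ *ᵥ x :=
  rfl

@[fun_prop]
theorem Matrix.differentiable_mulVec {m k : Type*} [Fintype m] [Fintype k] (M : Matrix m k ℝ) :
    Differentiable ℝ (M *ᵥ ·) :=
  (LinearMap.toContinuousLinearMap M.mulVecLin).differentiable

theorem fderiv_apply_eq_grad_dotProduct (f : (Fin n → ℝ) → ℝ) (θ v : Fin n → ℝ) :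
    fderiv ℝ f θ v = grad f θ ⬝ᵥ v := by
  conv_lhs => rw [← Finset.univ_sum_single v]
  simp only [map_sum, grad, dotProduct]
  refine Finset.sum_congr rfl fun i _ => ?_
  rw [mul_comm, ← smul_eq_mul, ← map_smul, ← Pi.single_smul', smul_eq_mul, mul_one]

theorem grad_add_const (f : (Fin n → ℝ) → ℝ) (c : ℝ) :
    grad (fun x => f x + c) = grad f := by
  ext θ i
  simp only [grad, fderiv_add_const]

theorem diverg_eq_trace (g : (Fin n → ℝ) → Fin n → ℝ) (θ : Fin n → ℝ) :
    diverg g θ = LinearMap.trace ℝ _ (fderiv ℝ g θ : (Fin n → ℝ) →ₗ[ℝ] Fin n → ℝ) := by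
  rw [LinearMap.trace_eq_matrix_trace ℝ (Pi.basisFun ℝ (Fin n)), LinearMap.toMatrix_eq_toMatrix']
  simp [diverg, Matrix.trace, LinearMap.toMatrix'_apply]

noncomputable def affinePushforward (A : Matrix (Fin n) (Fin n) ℝ) (b : Fin n → ℝ)
    (f : (Fin n → ℝ) → ℝ) (x : Fin n → ℝ) : ℝ :=
  f (A⁻¹ *ᵥ (x - b)) * |A.det|⁻¹

/-- The flux `V` of the preconditioned Stein flow `∂ₜρ = div V` with target `p`. -/
noncomputable def steinFlux (k : (Fin n → ℝ) → (Fin n → ℝ) → ℝ)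
    (Q : (Fin n → ℝ) → (Fin n → ℝ) → Matrix (Fin n) (Fin n) ℝ) (ρ p : (Fin n → ℝ) → ℝ)
    (θ : Fin n → ℝ) : Fin n → ℝ :=
  ρ θ • ∫ θ', (k θ θ' * ρ θ') • (Q θ θ').mulVec
    (grad (fun y => Real.log (ρ y)) θ' - grad (fun y => Real.log (p y)) θ')

section Affine

variable {A : Matrix (Fin n) (Fin n) ℝ} (b : Fin n → ℝ)

theorem inv_mulVec_mulVec_add_sub (hA : IsUnit A.det) (θ : Fin n → ℝ) :
    A⁻¹ *ᵥ (A *ᵥ θ + b - b) = θ := by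
  simp [mulVec_mulVec, nonsing_inv_mul A hA]

theorem mulVec_inv_mulVec_sub_add (hA : IsUnit A.det) (x : Fin n → ℝ) :
    A *ᵥ (A⁻¹ *ᵥ (x - b)) + b = x := by
  simp [mulVec_mulVec, mul_nonsing_inv A hA]

theorem grad_comp_affine_symm (hA : IsUnit A.det) (f : (Fin n → ℝ) → ℝ) (θ : Fin n → ℝ) :
    grad (fun x => f (A⁻¹ *ᵥ (x - b))) (A *ᵥ θ + b) = A⁻¹ᵀ *ᵥ grad f θ := by
  set L := A.toContinuousLinearEquivOfIsUnitDet hA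
  have hfderiv : fderiv ℝ (fun x => f (A⁻¹ *ᵥ (x - b))) (A *ᵥ θ + b)
      = (fderiv ℝ f θ).comp (L.symm : (Fin n → ℝ) →L[ℝ] Fin n → ℝ) := by
    change fderiv ℝ (fun x => (f ∘ L.symm) (x - b)) _ = _
    rw [fderiv_comp_sub, L.symm.comp_right_fderiv, toContinuousLinearEquivOfIsUnitDet_symm_apply,
      inv_mulVec_mulVec_add_sub b hA]
  ext i
  rw [grad, hfderiv, ContinuousLinearMap.comp_apply, fderiv_apply_eq_grad_dotProduct,
    ContinuousLinearEquiv.coe_coe, toContinuousLinearEquivOfIsUnitDet_symm_apply,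
    mulVec_single_one]
  exact dotProduct_comm _ _

theorem diverg_smul_conj_affine (hA : IsUnit A.det) (g : (Fin n → ℝ) → Fin n → ℝ) (c : ℝ)
    (x : Fin n → ℝ) :
    diverg (fun y => c • A *ᵥ g (A⁻¹ *ᵥ (y - b))) x = c * diverg g (A⁻¹ *ᵥ (x - b)) := by
  set L := A.toContinuousLinearEquivOfIsUnitDet hA
  have hfderiv : fderiv ℝ (fun y => c • A *ᵥ g (A⁻¹ *ᵥ (y - b))) x
      = c • (L : (Fin n → ℝ) →L[ℝ] Fin n → ℝ).comp
          ((fderiv ℝ g (A⁻¹ *ᵥ (x - b))).comp (L.symm : (Fin n → ℝ) →L[ℝ] Fin n → ℝ)) := by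
    have hconj : (fun y => c • A *ᵥ g (A⁻¹ *ᵥ (y - b))) = c • (L ∘ (g ∘ L.symm) ∘ (· - b)) := by
      ext y; simp [L]
    rw [hconj, fderiv_const_smul_field, Pi.smul_apply, L.comp_fderiv]
    change c • _ ∘SL fderiv ℝ (fun y => (g ∘ L.symm) (y - b)) x = _
    rw [fderiv_comp_sub, L.symm.comp_right_fderiv]
    rfl
  rw [diverg_eq_trace, diverg_eq_trace, hfderiv, ContinuousLinearMap.toLinearMap_smul, map_smul,
    smul_eq_mul]
  exact congrArg (c * ·) (LinearMap.trace_conj' _ L.toLinearEquiv)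

theorem integral_eq_abs_det_smul_integral_comp_affine (hA : IsUnit A.det) {E : Type*}
    [NormedAddCommGroup E] [NormedSpace ℝ E] (f : (Fin n → ℝ) → E) :
    ∫ x, f x = |A.det| • ∫ θ, f (A *ᵥ θ + b) := by
  set L := A.toContinuousLinearEquivOfIsUnitDet hA
  have hmap : Measure.map L.toHomeomorph.toMeasurableEquiv volume
      = ENNReal.ofReal |A.det|⁻¹ • volume := by
    have hL := Measure.map_linearMap_addHaar_eq_smul_addHaar volume
      (f := Matrix.toLin' A) (by rw [LinearMap.det_toLin']; exact hA.ne_zero)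
    rwa [LinearMap.det_toLin', abs_inv] at hL
  have hcomp : ∫ θ, f (A *ᵥ θ + b) = |A.det|⁻¹ • ∫ x, f x :=
    calc ∫ θ, f (A *ᵥ θ + b)
        = ∫ x, f (x + b) ∂(Measure.map L.toHomeomorph.toMeasurableEquiv volume) := by
          rw [integral_map_equiv]; rfl
      _ = |A.det|⁻¹ • ∫ x, f x := by
          rw [hmap, integral_smul_measure, ENNReal.toReal_ofReal (by positivity),
            integral_add_right_eq_self f b]
  rw [hcomp, smul_inv_smul₀ (by simpa using hA.ne_zero)]

theorem affinePushforward_apply_affine (hA : IsUnit A.det) (f : (Fin n → ℝ) → ℝ)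
    (θ : Fin n → ℝ) : affinePushforward A b f (A *ᵥ θ + b) = f θ * |A.det|⁻¹ := by
  rw [affinePushforward, inv_mulVec_mulVec_add_sub b hA]

theorem grad_log_affinePushforward (hA : IsUnit A.det) {f : (Fin n → ℝ) → ℝ}
    (hf : ∀ x, f x ≠ 0) (θ : Fin n → ℝ) :
    grad (fun x => Real.log (affinePushforward A b f x)) (A *ᵥ θ + b)
      = A⁻¹ᵀ *ᵥ grad (fun x => Real.log (f x)) θ := by
  have hlog : (fun x => Real.log (affinePushforward A b f x))
      = fun x => Real.log (f (A⁻¹ *ᵥ (x - b))) + Real.log |A.det|⁻¹ :=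
    funext fun x => Real.log_mul (hf _) (by simpa using hA.ne_zero)
  rw [hlog, grad_add_const]
  exact grad_comp_affine_symm b hA (fun y => Real.log (f y)) θ

theorem smul_mulVec_inv_transpose_of_smul_eq (hA : IsUnit A.det) {k k' : ℝ}
    {Q Q' : Matrix (Fin n) (Fin n) ℝ} (h : k' • Q' = k • (A * Q * Aᵀ)) (w : Fin n → ℝ) :
    k' • Q' *ᵥ (A⁻¹ᵀ *ᵥ w) = A *ᵥ (k • Q *ᵥ w) := by
  have hAt : Aᵀ * A⁻¹ᵀ = 1 := by rw [← transpose_mul, nonsing_inv_mul A hA, transpose_one]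
  calc k' • Q' *ᵥ (A⁻¹ᵀ *ᵥ w) = (k' • Q') *ᵥ (A⁻¹ᵀ *ᵥ w) := (smul_mulVec _ _ _).symm
    _ = (k • (A * Q * Aᵀ)) *ᵥ (A⁻¹ᵀ *ᵥ w) := by rw [h]
    _ = A *ᵥ (k • Q *ᵥ w) := by
      rw [smul_mulVec, mulVec_mulVec, Matrix.mul_assoc, hAt, Matrix.mul_one,
        ← mulVec_mulVec, mulVec_smul]

theorem steinFlux_affinePushforward (hA : IsUnit A.det)
    {k k' : (Fin n → ℝ) → (Fin n → ℝ) → ℝ}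
    {Q Q' : (Fin n → ℝ) → (Fin n → ℝ) → Matrix (Fin n) (Fin n) ℝ}
    (hkQ : ∀ θ θ', k' (A *ᵥ θ + b) (A *ᵥ θ' + b) • Q' (A *ᵥ θ + b) (A *ᵥ θ' + b)
      = k θ θ' • (A * Q θ θ' * Aᵀ))
    {ρ p : (Fin n → ℝ) → ℝ} (hρ : ∀ x, ρ x ≠ 0) (hp : ∀ x, p x ≠ 0) (θ : Fin n → ℝ) :
    steinFlux k' Q' (affinePushforward A b ρ) (affinePushforward A b p) (A *ᵥ θ + b)
      = |A.det|⁻¹ • A *ᵥ steinFlux k Q ρ p θ := by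
  set L := A.toContinuousLinearEquivOfIsUnitDet hA
  have hintegrand : ∀ θ',
      (k' (A *ᵥ θ + b) (A *ᵥ θ' + b) * affinePushforward A b ρ (A *ᵥ θ' + b)) •
        Q' (A *ᵥ θ + b) (A *ᵥ θ' + b) *ᵥ
          (grad (fun y => Real.log (affinePushforward A b ρ y)) (A *ᵥ θ' + b)
            - grad (fun y => Real.log (affinePushforward A b p y)) (A *ᵥ θ' + b))
      = |A.det|⁻¹ • L ((k θ θ' * ρ θ') • Q θ θ' *ᵥ
          (grad (fun y => Real.log (ρ y)) θ' - grad (fun y => Real.log (p y)) θ')) := by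
    intro θ'
    rw [grad_log_affinePushforward b hA hρ, grad_log_affinePushforward b hA hp, ← mulVec_sub,
      affinePushforward_apply_affine b hA, mul_comm, ← smul_smul,
      smul_mulVec_inv_transpose_of_smul_eq hA (hkQ θ θ')]
    simp only [L, toContinuousLinearEquivOfIsUnitDet_apply, mulVec_smul, smul_smul]
    ring_nf
  rw [steinFlux, steinFlux, integral_eq_abs_det_smul_integral_comp_affine b hA]
  simp only [hintegrand]
  rw [integral_smul, L.integral_comp_comm, affinePushforward_apply_affine b hA,
    smul_inv_smul₀ (by simpa using hA.ne_zero)]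
  simp only [L, toContinuousLinearEquivOfIsUnitDet_apply, mulVec_smul, smul_smul, mul_comm]

end Affine

theorem preconditioned_stein_flow_affine_invariant_general
    (n : ℕ) (A : Matrix (Fin n) (Fin n) ℝ) (hA : IsUnit A.det) (b : Fin n → ℝ)
    (p : (Fin n → ℝ) → ℝ) (ρ : ℝ → (Fin n → ℝ) → ℝ)
    (hppos : ∀ x, 0 < p x) (hρpos : ∀ t x, 0 < ρ t x)
    (k kA : ℝ → (Fin n → ℝ) → (Fin n → ℝ) → ℝ)
    (Q QA : ℝ → (Fin n → ℝ) → (Fin n → ℝ) → Matrix (Fin n) (Fin n) ℝ)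
    (hkQ : ∀ t θ θ', kA t (A.mulVec θ + b) (A.mulVec θ' + b) •
        QA t (A.mulVec θ + b) (A.mulVec θ' + b) = k t θ θ' • (A * Q t θ θ' * Aᵀ))
    (pA : (Fin n → ℝ) → ℝ)
    (hpA : ∀ x, pA x = p (A⁻¹.mulVec (x - b)) * |A.det|⁻¹)
    (ρA : ℝ → (Fin n → ℝ) → ℝ)
    (hρA : ∀ t x, ρA t x = ρ t (A⁻¹.mulVec (x - b)) * |A.det|⁻¹)
    (V : ℝ → (Fin n → ℝ) → Fin n → ℝ)
    (hV : ∀ t θ, V t θ = ρ t θ • ∫ θ', (k t θ θ' * ρ t θ') • (Q t θ θ').mulVec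
        (grad (fun y => Real.log (ρ t y)) θ' - grad (fun y => Real.log (p y)) θ'))
    (hVdiff : ∀ t : ℝ, Differentiable ℝ (V t))
    (hflow : ∀ t θ, HasDerivAt (fun s => ρ s θ) (diverg (V t) θ) t)
    (VA : ℝ → (Fin n → ℝ) → Fin n → ℝ)
    (hVA : ∀ t x, VA t x = ρA t x • ∫ x', (kA t x x' * ρA t x') • (QA t x x').mulVec
        (grad (fun y => Real.log (ρA t y)) x' - grad (fun y => Real.log (pA y)) x')) :
    (∀ t θ, VA t (A.mulVec θ + b) = |A.det|⁻¹ • A.mulVec (V t θ)) ∧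
    (∀ t : ℝ, Differentiable ℝ (VA t)) ∧
    (∀ t x, HasDerivAt (fun s => ρA s x) (diverg (VA t) x) t) := by
  have hρA' : ∀ t, ρA t = affinePushforward A b (ρ t) := fun t => funext (hρA t)
  have hpA' : pA = affinePushforward A b p := funext hpA
  have hflux : ∀ t θ, VA t (A *ᵥ θ + b) = |A.det|⁻¹ • A *ᵥ V t θ := by
    intro t θ
    rw [show VA t = steinFlux (kA t) (QA t) (ρA t) pA from funext (hVA t),
      show V t = steinFlux (k t) (Q t) (ρ t) p from funext (hV t), hρA', hpA']
    exact steinFlux_affinePushforward b hA (hkQ t) (fun x => (hρpos t x).ne')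
      (fun x => (hppos x).ne') θ
  have hVA_eq : ∀ t, VA t = fun x => |A.det|⁻¹ • A *ᵥ V t (A⁻¹ *ᵥ (x - b)) := fun t =>
    funext fun x => by rw [← hflux, mulVec_inv_mulVec_sub_add b hA]
  refine ⟨hflux, fun t => ?_, fun t x => ?_⟩
  · rw [hVA_eq t]
    fun_prop
  · rw [hVA_eq t, diverg_smul_conj_affine b hA, mul_comm]
    simp only [hρA]
    exact (hflow t _).mul_const _

/-- Affine invariance of the preconditioned Stein gradient flow
`∂_t ρ(t,θ) = ∇·(ρ(t,θ) ∫ k(t,θ,θ') Q(t,θ,θ') (∇log ρ(t,θ') − ∇log p(θ')) ρ(t,θ') dθ')`: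
if `k̃(t,Aθ+b,Aθ'+b) Q̃(t,Aθ+b,Aθ'+b) = k(t,θ,θ') A Q(t,θ,θ') Aᵀ`, then the
pushforward densities satisfy the same equation with kernel `k̃` and
preconditioner `Q̃`, the transformed flux satisfying `Ṽ_t(Aθ+b) = |det A|⁻¹ A V_t(θ)`. -/
theorem preconditioned_stein_flow_affine_invariant
    (n : ℕ) (A : Matrix (Fin n) (Fin n) ℝ) (hA : IsUnit A.det) (b : Fin n → ℝ)
    (p : (Fin n → ℝ) → ℝ) (ρ : ℝ → (Fin n → ℝ) → ℝ)
    (hppos : ∀ x, 0 < p x) (hρpos : ∀ t x, 0 < ρ t x)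
    (hpdiff : Differentiable ℝ p)
    (hρt : ∀ θ, ∀ t : ℝ, DifferentiableAt ℝ (fun s => ρ s θ) t)
    (hρθ : ∀ t : ℝ, Differentiable ℝ (ρ t))
    (k kA : ℝ → (Fin n → ℝ) → (Fin n → ℝ) → ℝ)
    (Q QA : ℝ → (Fin n → ℝ) → (Fin n → ℝ) → Matrix (Fin n) (Fin n) ℝ)
    (hkQ : ∀ t θ θ', kA t (A.mulVec θ + b) (A.mulVec θ' + b) •
        QA t (A.mulVec θ + b) (A.mulVec θ' + b) = k t θ θ' • (A * Q t θ θ' * Aᵀ))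
    (pA : (Fin n → ℝ) → ℝ)
    (hpA : ∀ x, pA x = p (A⁻¹.mulVec (x - b)) * |A.det|⁻¹)
    (ρA : ℝ → (Fin n → ℝ) → ℝ)
    (hρA : ∀ t x, ρA t x = ρ t (A⁻¹.mulVec (x - b)) * |A.det|⁻¹)
    (hint : ∀ t θ, Integrable fun θ' => (k t θ θ' * ρ t θ') • (Q t θ θ').mulVec
        (grad (fun y => Real.log (ρ t y)) θ' - grad (fun y => Real.log (p y)) θ'))
    (V : ℝ → (Fin n → ℝ) → Fin n → ℝ)
    (hV : ∀ t θ, V t θ = ρ t θ • ∫ θ', (k t θ θ' * ρ t θ') • (Q t θ θ').mulVec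
        (grad (fun y => Real.log (ρ t y)) θ' - grad (fun y => Real.log (p y)) θ'))
    (hVdiff : ∀ t : ℝ, Differentiable ℝ (V t))
    (hflow : ∀ t θ, HasDerivAt (fun s => ρ s θ) (diverg (V t) θ) t)
    (VA : ℝ → (Fin n → ℝ) → Fin n → ℝ)
    (hVA : ∀ t x, VA t x = ρA t x • ∫ x', (kA t x x' * ρA t x') • (QA t x x').mulVec
        (grad (fun y => Real.log (ρA t y)) x' - grad (fun y => Real.log (pA y)) x')) :
    (∀ t θ, VA t (A.mulVec θ + b) = |A.det|⁻¹ • A.mulVec (V t θ)) ∧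
    (∀ t : ℝ, Differentiable ℝ (VA t)) ∧
    (∀ t x, HasDerivAt (fun s => ρA s x) (diverg (VA t) x) t) :=
  preconditioned_stein_flow_affine_invariant_general n A hA b p ρ hppos hρpos k kA Q QA hkQ pA hpA
    ρA hρA V hV hVdiff hflow VA hVA
end

section
/- Let A be an invertible real n×n matrix, b ∈ ℝ^n, φ(θ) = Aθ + b. Let ρ, π : ℝ^n → (0,∞) be differentiable with pushforward densities ρ̃(x) = ρ(A⁻¹(x−b))·|det A|⁻¹ and π̃(x) = π(A⁻¹(x−b))·|det A|⁻¹. Let k, k̃ : ℝ^n × ℝ^n → ℝ and Q, Q̃ : ℝ^n × ℝ^n → ℝ^{n×n} satisfy k̃(φ(θ), φ(θ'))·Q̃(φ(θ), φ(θ')) = k(θ, θ')·A·Q(θ, θ')·Aᵀ for all θ, θ'. Assume that for each θ the function θ' ↦ k(θ,θ')·Q(θ,θ')·(∇log π(θ') − ∇log ρ(θ'))·ρ(θ') is Lebesgue-integrable, and define the mean-field drifts F(θ) = ∫ k(θ,θ')·Q(θ,θ')·(∇log π(θ') − ∇log ρ(θ'))·ρ(θ') dθ' and F̃(x) = ∫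 k̃(x,x')·Q̃(x,x')·(∇log π̃(x') − ∇log ρ̃(x'))·ρ̃(x') dx'. Then A·F(θ) = F̃(φ(θ)) for all θ ∈ ℝ^n. -/
open Matrix MeasureTheory

/-- Apply a continuous linear functional to a vector expanded in the standard basis. -/
lemma clm_apply_eq_sum {n : ℕ} (D : (Fin n → ℝ) →L[ℝ] ℝ) (w : Fin n → ℝ) :
    D w = ∑ j, w j * D (Pi.single j 1) := by
  conv_lhs => rw [← Finset.univ_sum_single w]
  rw [map_sum]
  refine Finset.sum_congr rfl fun j _ => ?_
  have : Pi.single j (w j) = w j • (Pi.single j (1 : ℝ) : Fin n → ℝ) := by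
    rw [← Pi.single_smul, smul_eq_mul, mul_one]
  rw [this, ContinuousLinearMap.map_smul, smul_eq_mul]

/-- Chain rule for the gradient of the log of a pushforward density under an affine map. -/
lemma grad_log_affine {n : ℕ} (A : Matrix (Fin n) (Fin n) ℝ) (hA : IsUnit A.det)
    (b : Fin n → ℝ) (p : (Fin n → ℝ) → ℝ) (hppos : ∀ θ, 0 < p θ)
    (hpdiff : Differentiable ℝ p) (pA : (Fin n → ℝ) → ℝ)
    (hpA : ∀ x, pA x = p (A⁻¹.mulVec (x - b)) * |A.det|⁻¹) (θ' : Fin n → ℝ) :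
    grad (fun y => Real.log (pA y)) (A.mulVec θ' + b) =
      A⁻¹ᵀ.mulVec (grad (fun y => Real.log (p y)) θ') := by
  have hdet : (|A.det| : ℝ)⁻¹ ≠ 0 := by
    simp [abs_eq_zero, hA.ne_zero]
  -- rewrite log pA as a sum of a composition and a constant
  have hfun : (fun y => Real.log (pA y)) =
      fun y => Real.log (p (A⁻¹.mulVec (y - b))) + Real.log |A.det|⁻¹ := by
    funext y
    rw [hpA, Real.log_mul (hppos _).ne' hdet]
  -- derivative of the inner affine map
  set L : (Fin n → ℝ) →L[ℝ] (Fin n → ℝ) :=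
    LinearMap.toContinuousLinearMap (Matrix.mulVecLin A⁻¹) with hL
  have hLapp : ∀ v, L v = A⁻¹.mulVec v := fun v => rfl
  set x : Fin n → ℝ := A.mulVec θ' + b with hx
  have hinv : A⁻¹.mulVec (x - b) = θ' := by
    rw [hx, add_sub_cancel_right, Matrix.mulVec_mulVec, Matrix.nonsing_inv_mul A hA,
      Matrix.one_mulVec]
  have hinner : HasFDerivAt (fun y => A⁻¹.mulVec (y - b)) L x := by
    have h1 : HasFDerivAt (fun y : Fin n → ℝ => L y - A⁻¹.mulVec b) L x :=
      (L.hasFDerivAt).sub_const _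
    have : (fun y : Fin n → ℝ => L y - A⁻¹.mulVec b) = fun y => A⁻¹.mulVec (y - b) := by
      funext y
      rw [hLapp, ← Matrix.mulVec_sub]
    rwa [this] at h1
  set D : (Fin n → ℝ) →L[ℝ] ℝ := fderiv ℝ (fun y => Real.log (p y)) θ' with hD
  have hlogdiff : DifferentiableAt ℝ (fun y => Real.log (p y)) θ' :=
    (hpdiff θ').log (hppos θ').ne'
  have houter : HasFDerivAt (fun y => Real.log (p y)) D θ' := hlogdiff.hasFDerivAt
  have hcomp : HasFDerivAt (fun y => Real.log (p (A⁻¹.mulVec (y - b)))) (D.comp L) x := by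
    have := (hinv ▸ houter).comp x hinner
    exact this
  have hder : HasFDerivAt (fun y => Real.log (pA y)) (D.comp L) x := by
    rw [hfun]
    exact hcomp.add_const _
  funext i
  show fderiv ℝ (fun y => Real.log (pA y)) x (Pi.single i 1) = _
  rw [hder.fderiv]
  have : (D.comp L) (Pi.single i 1) = D (A⁻¹.mulVec (Pi.single i 1)) := rfl
  rw [this, clm_apply_eq_sum]
  simp only [Matrix.mulVec_single, mul_one]
  rw [show (A⁻¹ᵀ.mulVec (grad (fun y => Real.log (p y)) θ')) i
      = ∑ j, A⁻¹ j i * grad (fun y => Real.log (p y)) θ' j from rfl]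
  refine Finset.sum_congr rfl fun j _ => ?_
  simp only [Pi.smul_apply, op_smul_eq_mul, mul_one, Matrix.col_apply]
  rfl

/-- Change of variables for the Bochner integral under an invertible affine map of `ℝⁿ`. -/
lemma integral_affine_change {n : ℕ} (A : Matrix (Fin n) (Fin n) ℝ) (hA : IsUnit A.det)
    (b : Fin n → ℝ) (g : (Fin n → ℝ) → (Fin n → ℝ)) :
    ∫ x, g x = |A.det| • ∫ θ', g (A.mulVec θ' + b) := by
  have hdet : A.det ≠ 0 := hA.ne_zero
  have hInv : Invertible A := A.invertibleOfIsUnitDet hA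
  let ℓ : (Fin n → ℝ) ≃ₗ[ℝ] (Fin n → ℝ) := Matrix.toLinearEquiv' A hInv
  let e : (Fin n → ℝ) ≃ₜ (Fin n → ℝ) :=
    (ℓ.toContinuousLinearEquiv.toHomeomorph).trans (Homeomorph.addRight b)
  have he : ∀ θ, e θ = A.mulVec θ + b := fun θ => rfl
  have hmap : Measure.map e (volume : Measure (Fin n → ℝ)) =
      ENNReal.ofReal (|A.det|⁻¹) • volume := by
    have h1 : (e : (Fin n → ℝ) → (Fin n → ℝ)) =
        (fun x => x + b) ∘ (Matrix.toLin' A) := by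
      funext θ; rw [he]; simp [Matrix.toLin'_apply]
    rw [h1, ← Measure.map_map (measurable_add_const b) (Matrix.toLin' A).continuous_of_finiteDimensional.measurable,
      Real.map_matrix_volume_pi_eq_smul_volume_pi hdet, Measure.map_smul, abs_inv,
      map_add_right_eq_self volume b]
  have habs : |A.det| ≠ 0 := by simpa [abs_eq_zero] using hdet
  have hco : (⇑e.toMeasurableEquiv : (Fin n → ℝ) → (Fin n → ℝ)) = ⇑e := rfl
  have key : ∫ x, g x ∂(Measure.map e (volume : Measure (Fin n → ℝ)))
      = ∫ θ', g (A.mulVec θ' + b) := by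
    rw [← hco, MeasureTheory.integral_map_equiv e.toMeasurableEquiv g]
    exact integral_congr_ae (Filter.Eventually.of_forall fun θ => rfl)
  rw [hmap, integral_smul_measure, ENNReal.toReal_ofReal (by positivity)] at key
  rw [← key, smul_smul, mul_inv_cancel₀ habs, one_smul]

/-- Affine invariance of the Stein mean-field drift
`F(θ) = ∫ k(θ,θ') Q(θ,θ') (∇log p(θ') − ∇log ρ(θ')) ρ(θ') dθ'`: if
`k̃(Aθ+b,Aθ'+b) Q̃(Aθ+b,Aθ'+b) = k(θ,θ') A Q(θ,θ') Aᵀ`, then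
`A F(θ) = F̃(Aθ+b)`. -/
theorem stein_meanfield_drift_affine_invariant
    (n : ℕ) (A : Matrix (Fin n) (Fin n) ℝ) (hA : IsUnit A.det) (b : Fin n → ℝ)
    (ρ p : (Fin n → ℝ) → ℝ)
    (hρpos : ∀ θ, 0 < ρ θ) (hppos : ∀ θ, 0 < p θ)
    (hρdiff : Differentiable ℝ ρ) (hpdiff : Differentiable ℝ p)
    (ρA pA : (Fin n → ℝ) → ℝ)
    (hρA : ∀ x, ρA x = ρ (A⁻¹.mulVec (x - b)) * |A.det|⁻¹)
    (hpA : ∀ x, pA x = p (A⁻¹.mulVec (x - b)) * |A.det|⁻¹)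
    (k kA : (Fin n → ℝ) → (Fin n → ℝ) → ℝ)
    (Q QA : (Fin n → ℝ) → (Fin n → ℝ) → Matrix (Fin n) (Fin n) ℝ)
    (hkQ : ∀ θ θ', kA (A.mulVec θ + b) (A.mulVec θ' + b) •
        QA (A.mulVec θ + b) (A.mulVec θ' + b) = k θ θ' • (A * Q θ θ' * Aᵀ))
    (hint : ∀ θ, Integrable fun θ' => (k θ θ' * ρ θ') • (Q θ θ').mulVec
        (grad (fun y => Real.log (p y)) θ' - grad (fun y => Real.log (ρ y)) θ'))
    (F FA : (Fin n → ℝ) → Fin n → ℝ)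
    (hF : ∀ θ, F θ = ∫ θ', (k θ θ' * ρ θ') • (Q θ θ').mulVec
        (grad (fun y => Real.log (p y)) θ' - grad (fun y => Real.log (ρ y)) θ'))
    (hFA : ∀ x, FA x = ∫ x', (kA x x' * ρA x') • (QA x x').mulVec
        (grad (fun y => Real.log (pA y)) x' - grad (fun y => Real.log (ρA y)) x')) :
    ∀ θ, A.mulVec (F θ) = FA (A.mulVec θ + b) := by
  intro θ
  have hdet : A.det ≠ 0 := hA.ne_zero
  have habs : |A.det| ≠ 0 := by simpa [abs_eq_zero] using hdet
  set v : (Fin n → ℝ) → Fin n → ℝ :=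
    fun θ' => grad (fun y => Real.log (p y)) θ' - grad (fun y => Real.log (ρ y)) θ' with hv
  -- pointwise identity for the integrand
  have hpt : ∀ θ', (kA (A.mulVec θ + b) (A.mulVec θ' + b) * ρA (A.mulVec θ' + b)) •
      (QA (A.mulVec θ + b) (A.mulVec θ' + b)).mulVec
        (grad (fun y => Real.log (pA y)) (A.mulVec θ' + b)
          - grad (fun y => Real.log (ρA y)) (A.mulVec θ' + b))
      = |A.det|⁻¹ • A.mulVec ((k θ θ' * ρ θ') • (Q θ θ').mulVec (v θ')) := by
    intro θ'
    have hρval : ρA (A.mulVec θ' + b) = ρ θ' * |A.det|⁻¹ := by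
      rw [hρA, add_sub_cancel_right, Matrix.mulVec_mulVec, Matrix.nonsing_inv_mul A hA,
        Matrix.one_mulVec]
    have hgp := grad_log_affine A hA b p hppos hpdiff pA hpA θ'
    have hgρ := grad_log_affine A hA b ρ hρpos hρdiff ρA hρA θ'
    rw [hgp, hgρ, hρval, ← Matrix.mulVec_sub]
    have hmul : (kA (A.mulVec θ + b) (A.mulVec θ' + b) * (ρ θ' * |A.det|⁻¹)) •
        (QA (A.mulVec θ + b) (A.mulVec θ' + b)).mulVec (A⁻¹ᵀ.mulVec (v θ'))
        = (ρ θ' * |A.det|⁻¹) • ((kA (A.mulVec θ + b) (A.mulVec θ' + b) •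
            QA (A.mulVec θ + b) (A.mulVec θ' + b)).mulVec (A⁻¹ᵀ.mulVec (v θ'))) := by
      rw [Matrix.smul_mulVec, smul_smul, mul_comm]
    rw [hmul, hkQ θ θ', Matrix.smul_mulVec]
    have hcancel : (A * Q θ θ' * Aᵀ).mulVec (A⁻¹ᵀ.mulVec (v θ')) =
        A.mulVec ((Q θ θ').mulVec (v θ')) := by
      rw [Matrix.mulVec_mulVec, Matrix.mul_assoc, Matrix.mul_assoc, ← Matrix.transpose_mul,
        Matrix.nonsing_inv_mul A hA, Matrix.transpose_one, Matrix.mul_one,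
        ← Matrix.mulVec_mulVec]
    rw [hcancel, Matrix.mulVec_smul]
    rw [smul_smul, smul_smul]
    congr 1
    ring
  rw [hFA]
  rw [integral_affine_change A hA b
    (fun x' => (kA (A.mulVec θ + b) x' * ρA x') • (QA (A.mulVec θ + b) x').mulVec
      (grad (fun y => Real.log (pA y)) x' - grad (fun y => Real.log (ρA y)) x'))]
  simp only [hpt]
  rw [integral_smul, smul_smul, mul_inv_cancel₀ habs, one_smul]
  set M : (Fin n → ℝ) →L[ℝ] (Fin n → ℝ) :=
    LinearMap.toContinuousLinearMap (Matrix.mulVecLin A) with hM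
  have hMapp : ∀ w, M w = A.mulVec w := fun w => rfl
  have := M.integral_comp_comm (hint θ)
  calc A.mulVec (F θ) = M (F θ) := rfl
    _ = ∫ θ', M ((k θ θ' * ρ θ') • (Q θ θ').mulVec (v θ')) := by
        rw [hF θ]; exact (M.integral_comp_comm (hint θ)).symm
    _ = ∫ θ', A.mulVec ((k θ θ' * ρ θ') • (Q θ θ').mulVec (v θ')) := rfl
end

section
/- Let m_*, m_0 ∈ ℝ^n and let C_*, C_0 be symmetric positive-definite real n×n matrices. For t ≥ 0 define C_t as the inverse of the matrix C_*⁻¹ + e^{−t}·(C_0⁻¹ − C_*⁻¹) (which is symmetric positive definite, being a convex combination of C_*⁻¹ and C_0⁻¹ since e^{−t} ∈ (0,1]), and define m_t = m_* + e^{−t}·C_t·C_0⁻¹·(m_0 − m_*). Then t ↦ m_t and t ↦ C_t are differentiable on [0,∞), agree with (m_0, C_0) at t = 0, and satisfy dm_t/dt = C_t·C_*⁻¹·(m_* − m_t) and dC_t/dt = C_t − C_t·C_*⁻¹·C_t for all t ≥ 0. -/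
/-!
The precision matrix `B_t = C_t⁻¹ = C⋆⁻¹ + e^{-t} (C₀⁻¹ - C⋆⁻¹)` solves the linear equation
`B' = C⋆⁻¹ - B`, and for `t ≥ 0` it is a convex combination of `C⋆⁻¹` and `C₀⁻¹`, hence positive
definite. Differentiating the inverse, `C' = -C B' C = C - C C⋆⁻¹ C`, a Riccati equation. The mean
is `m_t = m⋆ + e^{-t} C_t w` with `w` constant, so `m' = e^{-t} (C' - C) w = -C C⋆⁻¹ (e^{-t} C w)
= C C⋆⁻¹ (m⋆ - m_t)`.
-/

open Matrix

-- Matrices carry no norm by default; `Ring.inverse` is differentiated in a normed algebra.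
attribute [local instance] Matrix.linftyOpNormedRing Matrix.linftyOpNormedAlgebra

variable {n : Type*}

lemma Matrix.PosDef.add_smul_sub {A B : Matrix n n ℝ} (hA : A.PosDef) (hB : B.PosDef) {s : ℝ}
    (hs₀ : 0 < s) (hs₁ : s ≤ 1) : (A + s • (B - A)).PosDef := by
  have hconvex : A + s • (B - A) = (1 - s) • A + s • B := by
    rw [smul_sub, sub_smul, one_smul]; abel
  rw [hconvex]
  exact PosDef.posSemidef_add (hA.posSemidef.smul (sub_nonneg.2 hs₁)) (hB.smul hs₀)

variable [Fintype n] {C : ℝ → Matrix n n ℝ} {C' : Matrix n n ℝ} {t : ℝ}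

lemma HasDerivAt.matrix_apply (hC : HasDerivAt C C' t) (i j : n) :
    HasDerivAt (fun s => C s i j) (C' i j) t :=
  hasDerivAt_pi.1 (hasDerivAt_pi.1 hC i) j

lemma HasDerivAt.matrix_mulVec_const (hC : HasDerivAt C C' t) (w : n → ℝ) :
    HasDerivAt (fun s => C s *ᵥ w) (C' *ᵥ w) t :=
  hasDerivAt_pi.2 fun i => HasDerivAt.fun_sum fun j _ => (hC.matrix_apply i j).mul_const (w j)

lemma HasDerivAt.matrix_inv [DecidableEq n] (hC : HasDerivAt C C' t) (hCt : IsUnit (C t)) :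
    HasDerivAt (fun s => (C s)⁻¹) (-((C t)⁻¹ * C' * (C t)⁻¹)) t := by
  have hinv := hasFDerivAt_ringInverse (𝕜 := ℝ) hCt.unit
  rw [hCt.unit_spec] at hinv
  have := hinv.comp_hasDerivAt t hC
  simp only [Function.comp_def, ← nonsing_inv_eq_ringInverse, coe_units_inv, hCt.unit_spec,
    _root_.neg_apply, ContinuousLinearMap.mulLeftRight_apply] at this
  exact this

lemma HasDerivAt.matrix_inv_riccati [DecidableEq n] {B : ℝ → Matrix n n ℝ} {P : Matrix n n ℝ}
    (hB : HasDerivAt B (P - B t) t) (hBt : IsUnit (B t)) :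
    HasDerivAt (fun s => (B s)⁻¹) ((B t)⁻¹ - (B t)⁻¹ * P * (B t)⁻¹) t := by
  refine (hB.matrix_inv hBt).congr_deriv ?_
  rw [Matrix.mul_sub, Matrix.sub_mul, nonsing_inv_mul _ ((isUnit_iff_isUnit_det _).1 hBt),
    Matrix.one_mul]
  abel

lemma hasDerivAt_add_exp_neg_smul_sub {E : Type*} [NormedAddCommGroup E] [NormedSpace ℝ E]
    (P Q : E) (t : ℝ) :
    HasDerivAt (fun s => P + Real.exp (-s) • (Q - P)) (P - (P + Real.exp (-t) • (Q - P))) t := by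
  refine (((hasDerivAt_neg t).exp.smul_const (Q - P)).const_add P).congr_deriv ?_
  simp

lemma hasDerivAt_add_exp_neg_smul_mulVec {P : Matrix n n ℝ}
    (hC : HasDerivAt C (C t - C t * P * C t) t) (a w : n → ℝ) :
    HasDerivAt (fun s => a + Real.exp (-s) • (C s *ᵥ w))
      ((C t * P) *ᵥ (a - (a + Real.exp (-t) • (C t *ᵥ w)))) t := by
  refine (((hasDerivAt_neg t).exp.smul (hC.matrix_mulVec_const w)).const_add a).congr_deriv ?_
  simp only [sub_add_cancel_left, mulVec_neg, mulVec_smul, mulVec_mulVec, sub_mulVec]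
  module

/-- Explicit solution of the Gaussian approximate Fisher–Rao gradient flow for a
Gaussian target `N(m⋆, C⋆)`: with `C_t = (C⋆⁻¹ + e^{−t}(C₀⁻¹ − C⋆⁻¹))⁻¹` and
`m_t = m⋆ + e^{−t} C_t C₀⁻¹ (m₀ − m⋆)`, the curves start at `(m₀, C₀)`, the
matrices being inverted are positive definite, and
`dm_t/dt = C_t C⋆⁻¹ (m⋆ − m_t)`, `dC_t/dt = C_t − C_t C⋆⁻¹ C_t` for `t ≥ 0`. -/
theorem gaussian_fisherRao_flow_explicit_solution
    (n : ℕ) (mstar m0 : Fin n → ℝ)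
    (Cstar C0 : Matrix (Fin n) (Fin n) ℝ)
    (hCstar : Cstar.PosDef) (hC0 : C0.PosDef)
    (Ct : ℝ → Matrix (Fin n) (Fin n) ℝ)
    (hCt : ∀ t, Ct t = (Cstar⁻¹ + Real.exp (-t) • (C0⁻¹ - Cstar⁻¹))⁻¹)
    (mt : ℝ → Fin n → ℝ)
    (hmt : ∀ t, mt t = mstar + Real.exp (-t) • (Ct t).mulVec (C0⁻¹.mulVec (m0 - mstar))) :
    mt 0 = m0 ∧ Ct 0 = C0 ∧
    (∀ t : ℝ, 0 ≤ t →
      (Cstar⁻¹ + Real.exp (-t) • (C0⁻¹ - Cstar⁻¹)).PosDef ∧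
      (∀ i, HasDerivAt (fun s => mt s i) (((Ct t * Cstar⁻¹).mulVec (mstar - mt t)) i) t) ∧
      (∀ i j, HasDerivAt (fun s => Ct s i j)
        ((Ct t - Ct t * Cstar⁻¹ * Ct t) i j) t)) := by
  have hC0det : IsUnit C0.det := (isUnit_iff_isUnit_det C0).1 hC0.isUnit
  have hCt0 : Ct 0 = C0 := by
    rw [hCt, neg_zero, Real.exp_zero, one_smul, add_sub_cancel, nonsing_inv_nonsing_inv _ hC0det]
  refine ⟨?_, hCt0, fun t ht => ?_⟩
  · rw [hmt, hCt0, neg_zero, Real.exp_zero, one_smul, mulVec_mulVec, mul_nonsing_inv _ hC0det,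
      one_mulVec, add_sub_cancel]
  have hBt : (Cstar⁻¹ + Real.exp (-t) • (C0⁻¹ - Cstar⁻¹)).PosDef :=
    hCstar.inv.add_smul_sub hC0.inv (Real.exp_pos _) (Real.exp_le_one_iff.2 (neg_nonpos.2 ht))
  have hC : HasDerivAt Ct (Ct t - Ct t * Cstar⁻¹ * Ct t) t := by
    rw [funext hCt]
    exact (hasDerivAt_add_exp_neg_smul_sub _ _ t).matrix_inv_riccati hBt.isUnit
  have hm : HasDerivAt mt ((Ct t * Cstar⁻¹) *ᵥ (mstar - mt t)) t := by
    rw [funext hmt]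
    exact hasDerivAt_add_exp_neg_smul_mulVec hC _ _
  exact ⟨hBt, hasDerivAt_pi.1 hm, hC.matrix_apply⟩
end

section
/- Let m_*, m_0 ∈ ℝ^n, let C_* be a symmetric positive-definite real n×n matrix with largest eigenvalue λ_max, and let λ_0 > 0. For t ≥ 0 define m_t = m_* + exp(−t·C_*⁻¹)·(m_0 − m_*) and C_t = C_* + exp(−2t·C_*⁻¹)·(λ_0·I − C_*), where exp denotes the matrix exponential. Then: (i) dm_t/dt = −C_*⁻¹·(m_t − m_*) and dC_t/dt = 2I − C_t·C_*⁻¹ − C_*⁻¹·C_t for all t ≥ 0, with m_0 and C_0 = λ_0·I as initial values; and (ii) ‖m_t − m_*‖₂ ≤ e^{−t/λ_max}·‖m_0 − m_*‖₂ and ‖C_t − C_*‖₂ ≤ e^{−2t/λ_max}·‖λ_0·I − C_*‖₂ for all t ≥ 0, where ‖·‖₂ denotes the Euclidean norm on vectors and the induced operator (spectral) norm on matrices. -/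
open Matrix

/-- The Euclidean (ℓ²) norm of a vector in `ℝ^n`. -/
noncomputable def enorm2 {n : ℕ} (v : Fin n → ℝ) : ℝ :=
  ‖(EuclideanSpace.equiv (Fin n) ℝ).symm v‖

/-- The spectral norm (ℓ² → ℓ² operator norm) of a real `n × n` matrix. -/
noncomputable def mnorm2 {n : ℕ} (M : Matrix (Fin n) (Fin n) ℝ) : ℝ :=
  ‖Matrix.toEuclideanCLM (𝕜 := ℝ) M‖

open scoped Matrix.Norms.L2Operator

lemma mnorm2_eq_norm {n : ℕ} (M : Matrix (Fin n) (Fin n) ℝ) : mnorm2 M = ‖M‖ :=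
  (Matrix.cstar_norm_def M).symm

lemma enorm2_nonneg {n : ℕ} (v : Fin n → ℝ) : 0 ≤ enorm2 v := norm_nonneg _

lemma mnorm2_nonneg {n : ℕ} (M : Matrix (Fin n) (Fin n) ℝ) : 0 ≤ mnorm2 M := norm_nonneg _

lemma enorm2_mulVec_le {n : ℕ} (M : Matrix (Fin n) (Fin n) ℝ) (v : Fin n → ℝ) :
    enorm2 (M.mulVec v) ≤ mnorm2 M * enorm2 v := by
  rw [mnorm2_eq_norm]
  exact M.l2_opNorm_mulVec ((EuclideanSpace.equiv (Fin n) ℝ).symm v)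

lemma mnorm2_mul_le {n : ℕ} (M N : Matrix (Fin n) (Fin n) ℝ) :
    mnorm2 (M * N) ≤ mnorm2 M * mnorm2 N := by
  simp only [mnorm2_eq_norm]; exact norm_mul_le M N

lemma mnorm2_diagonal_le {n : ℕ} (d : Fin n → ℝ) (c : ℝ) (hc : 0 ≤ c)
    (h : ∀ i, |d i| ≤ c) : mnorm2 (Matrix.diagonal d) ≤ c := by
  rw [mnorm2]
  refine ContinuousLinearMap.opNorm_le_bound _ hc fun x => ?_
  have hx : (Matrix.toEuclideanCLM (𝕜 := ℝ) (Matrix.diagonal d)) x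
      = (WithLp.equiv 2 _).symm ((Matrix.diagonal d).mulVec (WithLp.equiv 2 _ x)) := by
    exact (WithLp.equiv 2 _).eq_symm_apply.mpr
      (Matrix.ofLp_toEuclideanCLM (𝕜 := ℝ) (Matrix.diagonal d) x)
  rw [hx, EuclideanSpace.norm_eq, EuclideanSpace.norm_eq]
  have hterm : ∀ i : Fin n,
      ‖((WithLp.equiv 2 ((i : Fin n) → ℝ)).symm ((Matrix.diagonal d).mulVec (WithLp.equiv 2 _ x))) i‖ ^ 2
        ≤ c ^ 2 * ‖x i‖ ^ 2 := by
    intro i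
    have : ((WithLp.equiv 2 _).symm ((Matrix.diagonal d).mulVec (WithLp.equiv 2 _ x))) i
        = d i * x i := by
      simp [Matrix.mulVec_diagonal]
    rw [this, Real.norm_eq_abs, Real.norm_eq_abs, abs_mul, mul_pow]
    exact mul_le_mul_of_nonneg_right (pow_le_pow_left₀ (abs_nonneg _) (h i) 2) (sq_nonneg _)
  calc Real.sqrt (∑ i, ‖_‖ ^ 2) ≤ Real.sqrt (∑ i, c ^ 2 * ‖x i‖ ^ 2) := by
        exact Real.sqrt_le_sqrt (Finset.sum_le_sum fun i _ => hterm i)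
    _ = c * Real.sqrt (∑ i, ‖x i‖ ^ 2) := by
        rw [← Finset.mul_sum, Real.sqrt_mul (sq_nonneg c), Real.sqrt_sq hc]

lemma mnorm2_exp_neg_smul_inv_le {n : ℕ} (Cstar : Matrix (Fin n) (Fin n) ℝ)
    (hC : Cstar.PosDef)
    (lammax : ℝ) (hlam : IsGreatest (Set.range hC.1.eigenvalues) lammax)
    (s : ℝ) (hs : 0 ≤ s) :
    mnorm2 (NormedSpace.exp ((-s) • Cstar⁻¹)) ≤ Real.exp (-s / lammax) := by
  obtain ⟨i0, hi0⟩ := hlam.1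
  haveI : Nontrivial (Matrix (Fin n) (Fin n) ℝ) :=
    ⟨0, 1, fun h => by have := congr_fun (congr_fun h i0) i0; simp at this⟩
  set e := hC.1.eigenvalues with he
  have hepos : ∀ i, 0 < e i := fun i => hC.eigenvalues_pos i
  have hle : ∀ i, e i ≤ lammax := fun i => hlam.2 ⟨i, rfl⟩
  set U : Matrix (Fin n) (Fin n) ℝ := (hC.1.eigenvectorUnitary : Matrix (Fin n) (Fin n) ℝ) with hUdef
  have hU : U ∈ Matrix.unitaryGroup (Fin n) ℝ := (hC.1.eigenvectorUnitary).2
  have hUstar : star U * U = 1 := Matrix.mem_unitaryGroup_iff'.mp hU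
  have hUstar' : U * star U = 1 := Matrix.mem_unitaryGroup_iff.mp hU
  have hUinv : U⁻¹ = star U := Matrix.inv_eq_left_inv hUstar
  have hUisUnit : IsUnit U := ⟨Unitary.toUnits ⟨U, hU⟩, rfl⟩
  have hsUU : ∀ X : Matrix (Fin n) (Fin n) ℝ, star U * (U * X) = X := fun X => by
    rw [← Matrix.mul_assoc, hUstar, Matrix.one_mul]
  have hconj_mul : ∀ M N : Matrix (Fin n) (Fin n) ℝ,
      (U * M * star U) * (U * N * star U) = U * (M * N) * star U := fun M N => by
    simp only [Matrix.mul_assoc, hsUU]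
  have hspec : Cstar = U * Matrix.diagonal e * star U := by
    have := hC.1.spectral_theorem
    simpa using this
  have hDinv : Matrix.diagonal e * Matrix.diagonal (fun i => (e i)⁻¹) = 1 := by
    have h1 : (fun i => e i * (e i)⁻¹) = fun _ => (1 : ℝ) :=
      funext fun i => mul_inv_cancel₀ (hepos i).ne'
    rw [Matrix.diagonal_mul_diagonal, h1, Matrix.diagonal_one]
  have hCinv : Cstar⁻¹ = U * Matrix.diagonal (fun i => (e i)⁻¹) * star U := by
    apply Matrix.inv_eq_right_inv
    rw [hspec, hconj_mul, hDinv, Matrix.mul_one, hUstar']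
  have hsmul : (-s) • Cstar⁻¹ = U * Matrix.diagonal ((-s) • fun i => (e i)⁻¹) * star U := by
    rw [hCinv, Matrix.diagonal_smul, mul_smul_comm, smul_mul_assoc]
  have hexp : NormedSpace.exp ((-s) • Cstar⁻¹)
      = U * Matrix.diagonal (fun i => Real.exp (-s * (e i)⁻¹)) * star U := by
    have hvec : NormedSpace.exp ((-s) • fun i => (e i)⁻¹)
        = fun i : Fin n => Real.exp (-s * (e i)⁻¹) := by
      funext i
      rw [Pi.coe_exp, ← Real.exp_eq_exp_ℝ]
      rfl
    rw [hsmul, ← hUinv, Matrix.exp_conj U _ hUisUnit, Matrix.exp_diagonal, hvec]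
  have hUnorm : ‖U‖ = 1 := CStarRing.norm_of_mem_unitary hU
  have hUstarnorm : ‖star U‖ = 1 := by
    rw [Matrix.star_eq_conjTranspose, Matrix.l2_opNorm_conjTranspose, hUnorm]
  have hdiag : mnorm2 (Matrix.diagonal (fun i => Real.exp (-s * (e i)⁻¹)))
      ≤ Real.exp (-s / lammax) := by
    apply mnorm2_diagonal_le _ _ (Real.exp_pos _).le
    intro i
    rw [abs_of_pos (Real.exp_pos _)]
    apply Real.exp_le_exp.mpr
    rw [div_eq_mul_inv, neg_mul, neg_mul]
    exact neg_le_neg (mul_le_mul_of_nonneg_left (inv_anti₀ (hepos i) (hle i)) hs)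
  calc mnorm2 (NormedSpace.exp ((-s) • Cstar⁻¹))
      = ‖U * Matrix.diagonal (fun i => Real.exp (-s * (e i)⁻¹)) * star U‖ := by
        rw [hexp, mnorm2_eq_norm]
    _ ≤ ‖U * Matrix.diagonal (fun i => Real.exp (-s * (e i)⁻¹))‖ * ‖star U‖ := norm_mul_le _ _
    _ ≤ ‖U‖ * ‖Matrix.diagonal (fun i => Real.exp (-s * (e i)⁻¹))‖ * ‖star U‖ :=
        mul_le_mul_of_nonneg_right (norm_mul_le _ _) (norm_nonneg _)
    _ = mnorm2 (Matrix.diagonal (fun i => Real.exp (-s * (e i)⁻¹))) := by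
        rw [hUnorm, hUstarnorm, mnorm2_eq_norm]; ring
    _ ≤ Real.exp (-s / lammax) := hdiag

/-- Explicit solution and convergence rate of the Gaussian approximate
(Bures–)Wasserstein gradient flow for a Gaussian target `N(m⋆, C⋆)` with
`C₀ = λ₀ I`: with `m_t = m⋆ + exp(−t C⋆⁻¹)(m₀ − m⋆)` and
`C_t = C⋆ + exp(−2t C⋆⁻¹)(λ₀ I − C⋆)`, the ODEs
`dm/dt = −C⋆⁻¹(m − m⋆)`, `dC/dt = 2I − C C⋆⁻¹ − C⋆⁻¹ C` hold with initial data
`(m₀, λ₀ I)`, and `‖m_t − m⋆‖₂ ≤ e^{−t/λmax} ‖m₀ − m⋆‖₂`,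
`‖C_t − C⋆‖₂ ≤ e^{−2t/λmax} ‖λ₀ I − C⋆‖₂`, where `λmax` is the largest
eigenvalue of `C⋆`. -/
theorem gaussian_wasserstein_flow_explicit_solution_and_rate
    (n : ℕ) (mstar m0 : Fin n → ℝ)
    (Cstar : Matrix (Fin n) (Fin n) ℝ) (hCstar : Cstar.PosDef)
    (lammax : ℝ) (hlammax : IsGreatest (Set.range hCstar.1.eigenvalues) lammax)
    (lam0 : ℝ) (hlam0 : 0 < lam0)
    (mt : ℝ → Fin n → ℝ)
    (hmt : ∀ t, mt t =
      mstar + (NormedSpace.exp ((-t) • Cstar⁻¹)).mulVec (m0 - mstar))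
    (Ct : ℝ → Matrix (Fin n) (Fin n) ℝ)
    (hCt : ∀ t, Ct t =
      Cstar + NormedSpace.exp ((-(2 * t)) • Cstar⁻¹) * (lam0 • (1 : Matrix (Fin n) (Fin n) ℝ) - Cstar)) :
    mt 0 = m0 ∧ Ct 0 = lam0 • (1 : Matrix (Fin n) (Fin n) ℝ) ∧
    (∀ t : ℝ, 0 ≤ t →
      (∀ i, HasDerivAt (fun s => mt s i) ((-(Cstar⁻¹.mulVec (mt t - mstar))) i) t) ∧
      (∀ i j, HasDerivAt (fun s => Ct s i j)
        (((2 : ℝ) • (1 : Matrix (Fin n) (Fin n) ℝ) - Ct t * Cstar⁻¹ - Cstar⁻¹ * Ct t) i j) t) ∧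
      enorm2 (mt t - mstar) ≤ Real.exp (-t / lammax) * enorm2 (m0 - mstar) ∧
      mnorm2 (Ct t - Cstar) ≤
        Real.exp (-(2 * t) / lammax) *
          mnorm2 (lam0 • (1 : Matrix (Fin n) (Fin n) ℝ) - Cstar)) := by
  have hdet : IsUnit Cstar.det := hCstar.det_pos.ne'.isUnit
  have hCA : Cstar * Cstar⁻¹ = 1 := Matrix.mul_nonsing_inv _ hdet
  have hAC : Cstar⁻¹ * Cstar = 1 := Matrix.nonsing_inv_mul _ hdet
  set A := Cstar⁻¹ with hAdef
  set d := m0 - mstar with hddef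
  set B := lam0 • (1 : Matrix (Fin n) (Fin n) ℝ) - Cstar with hBdef
  have hAB : A * B = B * A := by
    rw [hBdef]
    rw [Matrix.mul_sub, Matrix.sub_mul, mul_smul_comm, smul_mul_assoc, Matrix.mul_one,
      Matrix.one_mul, hAC, hCA]
  refine ⟨?_, ?_, ?_⟩
  · rw [hmt 0]
    simp only [neg_zero, zero_smul, NormedSpace.exp_zero, Matrix.one_mulVec]
    rw [hddef]
    abel
  · rw [hCt 0]
    simp only [mul_zero, neg_zero, zero_smul, NormedSpace.exp_zero, Matrix.one_mul]
    rw [hBdef]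
    abel
  · intro t ht
    have hcommA : ∀ r : ℝ, Commute A (NormedSpace.exp (r • A)) :=
      fun r => ((Commute.refl A).smul_right r).exp_right
    refine ⟨?_, ?_, ?_, ?_⟩
    · -- mean ODE
      intro i
      set E := NormedSpace.exp ((-t) • A) with hEdef
      let L : Matrix (Fin n) (Fin n) ℝ →ₗ[ℝ] ℝ :=
        { toFun := fun M => (M.mulVec d) i
          map_add' := fun M N => by simp [Matrix.add_mulVec]
          map_smul' := fun c M => by simp [Matrix.smul_mulVec] }
      have hg : HasDerivAt (fun u : ℝ => NormedSpace.exp (u • A)) (E * A) (-t) :=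
        hasDerivAt_exp_smul_const A (-t)
      have hgneg : HasDerivAt (fun s : ℝ => NormedSpace.exp ((-s) • A))
          (-(E * A)) t := by
        simpa [Function.comp_def, neg_smul] using hg.scomp t (hasDerivAt_neg t)
      have hcomp := ((LinearMap.toContinuousLinearMap L).hasFDerivAt.comp_hasDerivAt t
        hgneg).const_add (mstar i)
      have hfun : (fun s => mt s i)
          = fun s => mstar i + (LinearMap.toContinuousLinearMap L)
              (NormedSpace.exp ((-s) • A)) := by
        funext u
        rw [hmt u]
        rfl
      rw [hfun]
      refine hcomp.congr_deriv (Eq.symm ?_)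
      have hmat : (-(E * A)).mulVec d = -(A.mulVec (E.mulVec d)) := by
        rw [Matrix.neg_mulVec, Matrix.mulVec_mulVec, (hcommA (-t)).eq]
      have hmd : mt t - mstar = E.mulVec d := by
        rw [hmt t, add_sub_cancel_left]
      show (-(A.mulVec (mt t - mstar))) i = ((-(E * A)).mulVec d) i
      rw [hmd, hmat]
    · -- covariance ODE
      intro i j
      set X := (-2 : ℝ) • A with hXdef
      have hXeq : ∀ u : ℝ, (-(2 * u)) • A = u • X := by
        intro u
        rw [hXdef, smul_smul]
        congr 1
        ring
      set E2 := NormedSpace.exp ((-(2 * t)) • A) with hE2def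
      let L2 : Matrix (Fin n) (Fin n) ℝ →ₗ[ℝ] ℝ :=
        { toFun := fun M => (M * B) i j
          map_add' := fun M N => by simp [Matrix.add_mul]
          map_smul' := fun c M => by simp [Matrix.smul_mul] }
      have hg2 : HasDerivAt (fun u : ℝ => NormedSpace.exp (u • X))
          (NormedSpace.exp (t • X) * X) t := hasDerivAt_exp_smul_const X t
      have hcomp2 := ((LinearMap.toContinuousLinearMap L2).hasFDerivAt.comp_hasDerivAt t
        hg2).const_add (Cstar i j)
      have hfun2 : (fun s => Ct s i j)
          = fun s => Cstar i j + (LinearMap.toContinuousLinearMap L2)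
              (NormedSpace.exp (s • X)) := by
        funext u
        rw [hCt u, ← hXeq u]
        rfl
      rw [hfun2]
      refine hcomp2.congr_deriv (Eq.symm ?_)
      have hE2A : A * E2 = E2 * A := (hcommA (-(2 * t))).eq
      have hmat2 : (2 : ℝ) • (1 : Matrix (Fin n) (Fin n) ℝ) - Ct t * A - A * Ct t
          = NormedSpace.exp (t • X) * X * B := by
        rw [← hXeq t, ← hE2def, hCt t, ← hE2def, hXdef]
        calc (2 : ℝ) • (1 : Matrix (Fin n) (Fin n) ℝ) - (Cstar + E2 * B) * A
              - A * (Cstar + E2 * B)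
            = (2 : ℝ) • (1 : Matrix (Fin n) (Fin n) ℝ) - (1 + E2 * (A * B))
              - (1 + E2 * (A * B)) := by
              rw [Matrix.add_mul, Matrix.mul_add, hCA, hAC, Matrix.mul_assoc E2 B A, ← hAB,
                ← Matrix.mul_assoc A E2 B, hE2A, Matrix.mul_assoc E2 A B]
          _ = (-2 : ℝ) • (E2 * (A * B)) := by
              module
          _ = E2 * ((-2 : ℝ) • A) * B := by
              rw [mul_smul_comm, smul_mul_assoc, Matrix.mul_assoc]
      rw [hmat2]
      rfl
    · -- mean convergence
      have hmd : mt t - mstar = (NormedSpace.exp ((-t) • A)).mulVec d := by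
        rw [hmt t, add_sub_cancel_left]
      rw [hmd]
      calc enorm2 ((NormedSpace.exp ((-t) • A)).mulVec d)
          ≤ mnorm2 (NormedSpace.exp ((-t) • A)) * enorm2 d := enorm2_mulVec_le _ _
        _ ≤ Real.exp (-t / lammax) * enorm2 d :=
            mul_le_mul_of_nonneg_right
              (mnorm2_exp_neg_smul_inv_le Cstar hCstar lammax hlammax t ht)
              (enorm2_nonneg _)
    · -- covariance convergence
      have hcd : Ct t - Cstar = NormedSpace.exp ((-(2 * t)) • A) * B := by
        rw [hCt t, add_sub_cancel_left]
      rw [hcd]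
      calc mnorm2 (NormedSpace.exp ((-(2 * t)) • A) * B)
          ≤ mnorm2 (NormedSpace.exp ((-(2 * t)) • A)) * mnorm2 B := mnorm2_mul_le _ _
        _ ≤ Real.exp (-(2 * t) / lammax) * mnorm2 B :=
            mul_le_mul_of_nonneg_right
              (mnorm2_exp_neg_smul_inv_le Cstar hCstar lammax hlammax (2 * t)
                (by positivity))
              (mnorm2_nonneg _)
end

section
/- Let λ_* > 0 and let λ : [0,∞) → ℝ be differentiable with λ(t) > 0 for all t ≥ 0 and λ'(t) = 1/(2·λ(t)) − 1/(2·λ_*) for all t ≥ 0. Then for every t ≥ 0, λ(t) − λ_* = (λ(0) − λ_*)·exp(−t/(2·λ_*²) − (λ(t) − λ(0))/λ_*). -/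
/-! The quantity `(λ(s) − λ⋆) · exp (s / (2λ⋆²) + λ(s) / λ⋆)` is a first integral of the flow: its
derivative is `exp (…) · (λλ'/λ⋆ + (λ − λ⋆)/(2λ⋆²))`, which vanishes because `λλ' = (λ⋆ − λ)/(2λ⋆)`.
Equating its values at `0` and `t` and dividing by the exponential gives the identity. -/

open Real Set

theorem hasDerivAt_eigenvalueFlow_firstIntegral {lamstar x : ℝ} {lam : ℝ → ℝ}
    (hlamstar : lamstar ≠ 0) (hx : lam x ≠ 0)
    (hderiv : HasDerivAt lam (1 / (2 * lam x) - 1 / (2 * lamstar)) x) :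
    HasDerivAt (fun s => (lam s - lamstar) * exp (s / (2 * lamstar ^ 2) + lam s / lamstar)) 0 x := by
  have hexponent : HasDerivAt (fun s => s / (2 * lamstar ^ 2) + lam s / lamstar)
      (1 / (2 * lamstar ^ 2) + (1 / (2 * lam x) - 1 / (2 * lamstar)) / lamstar) x :=
    ((hasDerivAt_id x).div_const _).add (hderiv.div_const lamstar)
  refine ((hderiv.sub_const lamstar).mul hexponent.exp).congr_deriv ?_
  field_simp
  ring

theorem eigenvalueFlow_firstIntegral_eq {lamstar t : ℝ} {lam : ℝ → ℝ}
    (hlamstar : lamstar ≠ 0) (hne : ∀ s, 0 ≤ s → lam s ≠ 0)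
    (hderiv : ∀ s, 0 ≤ s → HasDerivAt lam (1 / (2 * lam s) - 1 / (2 * lamstar)) s) (ht : 0 ≤ t) :
    (lam t - lamstar) * exp (t / (2 * lamstar ^ 2) + lam t / lamstar) =
      (lam 0 - lamstar) * exp (lam 0 / lamstar) := by
  have hzero : ∀ s ∈ Ici (0 : ℝ), HasDerivAt
      (fun s => (lam s - lamstar) * exp (s / (2 * lamstar ^ 2) + lam s / lamstar)) 0 s :=
    fun s hs => hasDerivAt_eigenvalueFlow_firstIntegral hlamstar (hne s hs) (hderiv s hs)
  have hconst := constant_of_has_deriv_right_zero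
    (fun s hs => (hzero s hs.1).continuousAt.continuousWithinAt)
    (fun s hs => (hzero s hs.1).hasDerivWithinAt) t ⟨ht, le_rfl⟩
  simpa using hconst

/-- Explicit implicit-form solution of the eigenvalue ODE
`λ' = 1/(2λ) − 1/(2λ⋆)` of the vanilla Gaussian approximate gradient flow:
`λ(t) − λ⋆ = (λ(0) − λ⋆) exp(−t/(2λ⋆²) − (λ(t) − λ(0))/λ⋆)` for all `t ≥ 0`. -/
theorem vanilla_gaussian_flow_eigenvalue_identity
    (lamstar : ℝ) (hlamstar : 0 < lamstar)
    (lam : ℝ → ℝ)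
    (hpos : ∀ t : ℝ, 0 ≤ t → 0 < lam t)
    (hderiv : ∀ t : ℝ, 0 ≤ t →
      HasDerivAt lam (1 / (2 * lam t) - 1 / (2 * lamstar)) t) :
    ∀ t : ℝ, 0 ≤ t →
      lam t - lamstar = (lam 0 - lamstar) *
        Real.exp (-t / (2 * lamstar ^ 2) - (lam t - lam 0) / lamstar) := by
  intro t ht
  have hconst := eigenvalueFlow_firstIntegral_eq hlamstar.ne' (fun s hs => (hpos s hs).ne')
    hderiv ht
  have hexp : -t / (2 * lamstar ^ 2) - (lam t - lam 0) / lamstar =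
      lam 0 / lamstar - (t / (2 * lamstar ^ 2) + lam t / lamstar) := by ring
  rw [hexp, exp_sub, ← mul_div_assoc, ← hconst, mul_div_cancel_right₀ _ (exp_pos _).ne']
end

section
/- Let 0 < α ≤ β, C_* > 0 and m_* ∈ ℝ, and let γ be the Gaussian measure on ℝ with mean m_* and variance C_*. Let h : ℝ → ℝ be measurable with α ≤ h(θ) ≤ β for all θ and ∫ h dγ = 1/C_*. Define A₁ = ∫ h(θ)·(θ − m_*) dγ(θ), A₂ = ∫ h(θ)·(θ − m_*)² dγ(θ), and λ₂ = (−(3/2 + A₂/2) + √((1/2 − A₂/2)² + 2·A₁²·C_*))/2. Then λ₂ ≤ −1/((7 + 4/√π)·(1 + log(β/α))). -/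
/-!
Cauchy–Schwarz for the weight `h` gives `A₁² C⋆ ≤ A₂`, and for `b ≤ a` the root
`(-(3 + a)/2 + √((1 - a)²/4 + 2b))/2` is at most `-1/(a + 3)`, so it suffices to show
`A₂ + 3 ≤ (7 + 4/√π)(1 + log(β/α))`.

For `A₂`, split at `(θ - m⋆)² = 4 C⋆ log(β/α)`. Below that level `h(θ)(θ - m⋆)²` is at
most `4 C⋆ log(β/α) h(θ)`, which integrates to `4 log(β/α)` by stationarity. Above it
`h ≤ β ≤ α exp((θ - m⋆)²/(4C⋆))`, and the Gaussian density of variance `C⋆` times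
`exp((θ - m⋆)²/(4C⋆))` is `√2` times the density of variance `2C⋆`, so the tail contributes
at most `2√2 α C⋆ ≤ 2√2` (as `α ≤ ∫ h dγ = 1/C⋆`). Hence `A₂ ≤ 4 log(β/α) + 3`.
-/

open MeasureTheory ProbabilityTheory Real
open scoped NNReal

lemma sq_integral_mul_le_integral_mul_integral_mul_sq {Ω : Type*} [MeasurableSpace Ω]
    {μ : Measure Ω} {w f : Ω → ℝ} (hw : 0 ≤ᵐ[μ] w) (hw_int : Integrable w μ)
    (hwf : Integrable (fun x => w x * f x) μ) (hwf2 : Integrable (fun x => w x * f x ^ 2) μ) :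
    (∫ x, w x * f x ∂μ) ^ 2 ≤ (∫ x, w x ∂μ) * ∫ x, w x * f x ^ 2 ∂μ := by
  have hquad : ∀ t : ℝ, 0 ≤ (∫ x, w x ∂μ) * (t * t) + (-2 * ∫ x, w x * f x ∂μ) * t
      + ∫ x, w x * f x ^ 2 ∂μ := by
    intro t
    have hexpand : ∫ x, w x * (f x - t) ^ 2 ∂μ = (∫ x, w x ∂μ) * (t * t)
        + (-2 * ∫ x, w x * f x ∂μ) * t + ∫ x, w x * f x ^ 2 ∂μ := by
      calc ∫ x, w x * (f x - t) ^ 2 ∂μ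
          = ∫ x, (t * t) * w x + (-2 * t) * (w x * f x) + w x * f x ^ 2 ∂μ := by
            congr 1; funext x; ring
        _ = _ := by
          rw [integral_add (f := fun x => t * t * w x + -2 * t * (w x * f x))
              ((hw_int.const_mul _).add (hwf.const_mul _)) hwf2,
            integral_add (hw_int.const_mul _) (hwf.const_mul _),
            integral_const_mul, integral_const_mul]
          ring
    rw [← hexpand]
    exact integral_nonneg_of_ae (hw.mono fun x hx => mul_nonneg hx (sq_nonneg _))
  have := discrim_le_zero hquad
  rw [discrim] at this
  linarith

lemma mul_le_mul_log_div_add_mul_exp {a b c s t : ℝ} (ha : 0 < a) (hac : a ≤ c) (hcb : c ≤ b)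
    (hs : 0 < s) (ht : 0 ≤ t) :
    c * t ≤ s * log (b / a) * c + a * (t * exp (t / s)) := by
  have hlog : 0 ≤ log (b / a) := log_nonneg ((one_le_div ha).2 (hac.trans hcb))
  have hc : 0 ≤ c := ha.le.trans hac
  by_cases hts : t ≤ s * log (b / a)
  · have : 0 ≤ a * (t * exp (t / s)) := by positivity
    nlinarith
  · have hexp : b < a * exp (t / s) := by
      rw [← div_lt_iff₀' ha, ← log_lt_iff_lt_exp (div_pos (ha.trans_le (hac.trans hcb)) ha),
        lt_div_iff₀ hs]
      linarith
    have : 0 ≤ s * log (b / a) * c := by positivity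
    nlinarith

section Gaussian

variable {μ : ℝ} {v : ℝ≥0}

lemma integrable_sub_pow_gaussianReal (m : ℝ) (k : ℕ) :
    Integrable (fun x => (x - m) ^ k) (gaussianReal μ v) := by
  rcases k.eq_zero_or_pos with rfl | hk
  · simp
  refine (((memLp_id_gaussianReal k).sub (memLp_const m)).integrable_norm_pow hk.ne').mono'
    (by fun_prop) (ae_of_all _ fun x => ?_)
  simp [norm_pow]

lemma integral_sub_sq_gaussianReal : ∫ x, (x - μ) ^ 2 ∂gaussianReal μ v = v := by
  have h := variance_fun_id_gaussianReal (μ := μ) (v := v)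
  rwa [variance_eq_integral aemeasurable_id', integral_id_gaussianReal] at h

lemma integrable_gaussianReal_iff (hv : v ≠ 0) {f : ℝ → ℝ} :
    Integrable f (gaussianReal μ v) ↔ Integrable (fun x => gaussianPDFReal μ v x * f x) := by
  rw [gaussianReal_of_var_ne_zero _ hv, integrable_withDensity_iff_integrable_smul'
    (measurable_gaussianPDF _ _) (ae_of_all _ fun _ => gaussianPDF_lt_top)]
  simp [toReal_gaussianPDF]

lemma gaussianPDFReal_mul_exp_sq_div (hv : v ≠ 0) (x : ℝ) :
    gaussianPDFReal μ v x * exp ((x - μ) ^ 2 / (4 * v)) =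
      √2 * gaussianPDFReal μ (2 * v) x := by
  have hv' : (0 : ℝ) < v := by positivity
  simp only [gaussianPDFReal, NNReal.coe_mul, NNReal.coe_ofNat]
  rw [mul_assoc, ← exp_add, show (2 : ℝ) * π * (2 * v) = 2 * (2 * π * v) by ring,
    sqrt_mul zero_le_two, mul_inv, ← mul_assoc, ← mul_assoc, mul_inv_cancel₀ (by positivity),
    one_mul]
  congr 2
  field_simp
  ring

lemma gaussianPDFReal_mul_mul_exp_sq_div (hv : v ≠ 0) (f : ℝ → ℝ) (x : ℝ) :
    gaussianPDFReal μ v x * (f x * exp ((x - μ) ^ 2 / (4 * v))) =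
      √2 * (gaussianPDFReal μ (2 * v) x * f x) := by
  rw [mul_left_comm, gaussianPDFReal_mul_exp_sq_div hv]; ring

lemma integrable_mul_exp_sq_div_gaussianReal_iff (hv : v ≠ 0) {f : ℝ → ℝ} :
    Integrable (fun x => f x * exp ((x - μ) ^ 2 / (4 * v))) (gaussianReal μ v) ↔
      Integrable f (gaussianReal μ (2 * v)) := by
  simp only [integrable_gaussianReal_iff hv,
    integrable_gaussianReal_iff (mul_ne_zero two_ne_zero hv),
    gaussianPDFReal_mul_mul_exp_sq_div hv]
  exact integrable_const_mul_iff (isUnit_iff_ne_zero.2 (by positivity : √2 ≠ 0)) _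

lemma integral_mul_exp_sq_div_gaussianReal (hv : v ≠ 0) (f : ℝ → ℝ) :
    ∫ x, f x * exp ((x - μ) ^ 2 / (4 * v)) ∂gaussianReal μ v =
      √2 * ∫ x, f x ∂gaussianReal μ (2 * v) := by
  rw [integral_gaussianReal_eq_integral_smul hv,
    integral_gaussianReal_eq_integral_smul (by positivity), ← integral_const_mul]
  simp only [smul_eq_mul, gaussianPDFReal_mul_mul_exp_sq_div hv]

lemma integrable_mul_sub_pow_gaussianReal {h : ℝ → ℝ} (hmeas : Measurable h) {c : ℝ}
    (hc : ∀ x, |h x| ≤ c) (m : ℝ) (k : ℕ) :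
    Integrable (fun x => h x * (x - m) ^ k) (gaussianReal μ v) :=
  (integrable_sub_pow_gaussianReal m k).bdd_mul hmeas.aestronglyMeasurable (ae_of_all _ hc)

lemma integral_mul_sub_sq_le_gaussianReal (hv : v ≠ 0) {h : ℝ → ℝ} (hmeas : Measurable h)
    {a b : ℝ} (ha : 0 < a) (hbound : ∀ x, a ≤ h x ∧ h x ≤ b) :
    ∫ x, h x * (x - μ) ^ 2 ∂gaussianReal μ v ≤
      4 * v * log (b / a) * ∫ x, h x ∂gaussianReal μ v + 2 * √2 * a * v := by
  have habs : ∀ x, |h x| ≤ b := fun x =>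
    (abs_of_pos (ha.trans_le (hbound x).1)).trans_le (hbound x).2
  have hint : Integrable h (gaussianReal μ v) := by
    simpa using integrable_mul_sub_pow_gaussianReal hmeas habs μ 0
  have htail : Integrable (fun x => (x - μ) ^ 2 * exp ((x - μ) ^ 2 / (4 * v)))
      (gaussianReal μ v) :=
    (integrable_mul_exp_sq_div_gaussianReal_iff hv).2 (integrable_sub_pow_gaussianReal μ 2)
  calc ∫ x, h x * (x - μ) ^ 2 ∂gaussianReal μ v
      ≤ ∫ x, 4 * v * log (b / a) * h x
          + a * ((x - μ) ^ 2 * exp ((x - μ) ^ 2 / (4 * v))) ∂gaussianReal μ v :=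
        integral_mono (integrable_mul_sub_pow_gaussianReal hmeas habs μ 2)
          ((hint.const_mul _).add (htail.const_mul _)) fun x =>
          (hbound x).elim fun hax hxb =>
            mul_le_mul_log_div_add_mul_exp ha hax hxb (by positivity) (sq_nonneg _)
    _ = 4 * v * log (b / a) * ∫ x, h x ∂gaussianReal μ v + 2 * √2 * a * v := by
      rw [integral_add (hint.const_mul _) (htail.const_mul _), integral_const_mul,
        integral_const_mul, integral_mul_exp_sq_div_gaussianReal hv,
        integral_sub_sq_gaussianReal]
      push_cast
      ring

lemma integral_mul_sub_sq_le_of_integral_eq_inv {C : ℝ} (hC : 0 < C) {h : ℝ → ℝ}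
    (hmeas : Measurable h) {a b : ℝ} (ha : 0 < a) (hbound : ∀ x, a ≤ h x ∧ h x ≤ b)
    (hstat : ∫ x, h x ∂gaussianReal μ C.toNNReal = 1 / C) :
    ∫ x, h x * (x - μ) ^ 2 ∂gaussianReal μ C.toNNReal ≤ 4 * log (b / a) + 2 * √2 := by
  have hint : Integrable h (gaussianReal μ C.toNNReal) := by
    simpa using integrable_mul_sub_pow_gaussianReal hmeas
      (fun x => (abs_of_pos (ha.trans_le (hbound x).1)).trans_le (hbound x).2) μ 0
  have haC : a * C ≤ 1 := by
    have := integral_mono (integrable_const a) hint fun x => (hbound x).1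
    rwa [integral_const, probReal_univ, one_smul, hstat, le_div_iff₀ hC] at this
  have hmoment := integral_mul_sub_sq_le_gaussianReal (μ := μ) (v := C.toNNReal)
    (by simpa using hC) hmeas ha hbound
  rw [hstat, Real.coe_toNNReal _ hC.le] at hmoment
  calc _ ≤ 4 * C * log (b / a) * (1 / C) + 2 * √2 * a * C := hmoment
    _ = 4 * log (b / a) + 2 * √2 * (a * C) := by field_simp
    _ ≤ 4 * log (b / a) + 2 * √2 := by nlinarith [sqrt_nonneg 2]

end Gaussian

lemma quadratic_root_le_neg_one_div {a b : ℝ} (ha : 0 ≤ a) (hba : b ≤ a) :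
    (-(3 / 2 + a / 2) + √((1 / 2 - a / 2) ^ 2 + 2 * b)) / 2 ≤ -(1 / (a + 3)) := by
  have hpos : 0 < a + 3 := by linarith
  have hsqrt : √((1 / 2 - a / 2) ^ 2 + 2 * b) ≤ (a + 3) / 2 - 2 / (a + 3) := by
    rw [sqrt_le_iff]
    constructor
    · rw [sub_nonneg, div_le_div_iff₀ hpos two_pos]
      nlinarith
    · have : 0 ≤ 4 / (a + 3) ^ 2 := by positivity
      have h2 : (a + 3) / 2 * (2 / (a + 3)) = 1 := by field_simp
      nlinarith
  have : 2 / (a + 3) = 2 * (1 / (a + 3)) := by ring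
  linarith

/-- Lower bound on the local convergence rate of the one-dimensional Gaussian
approximate Fisher–Rao gradient flow at its stationary point: with
`γ = N(m⋆, C⋆)`, `α ≤ h ≤ β`, `∫ h dγ = 1/C⋆`,
`A₁ = ∫ h(θ)(θ−m⋆) dγ`, `A₂ = ∫ h(θ)(θ−m⋆)² dγ` and
`λ₂ = (−(3/2 + A₂/2) + √((1/2 − A₂/2)² + 2A₁²C⋆))/2`, one has
`λ₂ ≤ −1/((7 + 4/√π)(1 + log(β/α)))`. -/
theorem gaussian_fisherRao_local_rate_logconcave
    (α β Cstar mstar : ℝ)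
    (hα : 0 < α) (hαβ : α ≤ β) (hCstar : 0 < Cstar)
    (h : ℝ → ℝ) (hmeas : Measurable h)
    (hbound : ∀ θ, α ≤ h θ ∧ h θ ≤ β)
    (hstat : ∫ θ, h θ ∂(gaussianReal mstar Cstar.toNNReal) = 1 / Cstar)
    (A₁ A₂ lam₂ : ℝ)
    (hA₁ : A₁ = ∫ θ, h θ * (θ - mstar) ∂(gaussianReal mstar Cstar.toNNReal))
    (hA₂ : A₂ = ∫ θ, h θ * (θ - mstar) ^ 2 ∂(gaussianReal mstar Cstar.toNNReal))
    (hlam₂ : lam₂ = (-(3 / 2 + A₂ / 2) +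
      Real.sqrt ((1 / 2 - A₂ / 2) ^ 2 + 2 * A₁ ^ 2 * Cstar)) / 2) :
    lam₂ ≤ -(1 / ((7 + 4 / Real.sqrt Real.pi) * (1 + Real.log (β / α)))) := by
  have hh : ∀ θ, 0 ≤ h θ := fun θ => hα.le.trans (hbound θ).1
  have hint : ∀ k : ℕ, Integrable (fun θ => h θ * (θ - mstar) ^ k)
      (gaussianReal mstar Cstar.toNNReal) :=
    integrable_mul_sub_pow_gaussianReal hmeas
      (fun θ => (abs_of_nonneg (hh θ)).trans_le (hbound θ).2) mstar
  have hCS : A₁ ^ 2 * Cstar ≤ A₂ := by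
    have := sq_integral_mul_le_integral_mul_integral_mul_sq (ae_of_all _ hh)
      (by simpa using hint 0) (by simpa using hint 1) (hint 2)
    rw [← hA₁, hstat, ← hA₂] at this
    rw [← le_div_iff₀ hCstar]
    linarith [show 1 / Cstar * A₂ = A₂ / Cstar by ring]
  have hA₂_nonneg : 0 ≤ A₂ :=
    hA₂ ▸ integral_nonneg fun θ => mul_nonneg (hh θ) (sq_nonneg _)
  have hA₂_le : A₂ ≤ 4 * log (β / α) + 3 := by
    have := hA₂ ▸ integral_mul_sub_sq_le_of_integral_eq_inv hCstar hmeas hα hbound hstat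
    nlinarith [sq_sqrt (zero_le_two : (0 : ℝ) ≤ 2), sqrt_nonneg 2]
  have hL : 0 ≤ log (β / α) := log_nonneg ((one_le_div hα).2 hαβ)
  have hM : A₂ + 3 ≤ (7 + 4 / √π) * (1 + log (β / α)) := by
    nlinarith [show 0 ≤ 4 / √π * (1 + log (β / α)) by positivity]
  calc lam₂ ≤ -(1 / (A₂ + 3)) := by
        rw [hlam₂, mul_assoc]; exact quadratic_root_le_neg_one_div hA₂_nonneg hCS
    _ ≤ _ := neg_le_neg (one_div_le_one_div_of_le (by positivity) hM)
end

section
/- Let 0 < α ≤ β, C_* > 0 and m_* ∈ ℝ, and let γ be the Gaussian measure on ℝ with mean m_* and variance C_*. Let h : ℝ → ℝ be measurable with α ≤ h(θ) ≤ β for all θ and ∫ h dγ = 1/C_*. Then ∫ h(θ)·(θ − m_*)² dγ(θ) ≤ (4 + 4/√π)·(1 + log(β/α)). -/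
open MeasureTheory ProbabilityTheory
open scoped NNReal ENNReal

private lemma max_le_exp_div {s : ℝ} (u : ℝ) (hs : 0 < s) :
    max u 0 ≤ Real.exp (s * u) / (s * Real.exp 1) := by
  have hse : 0 < s * Real.exp 1 := mul_pos hs (Real.exp_pos 1)
  rcases le_or_gt u 0 with hu | hu
  · rw [max_eq_right hu]
    positivity
  · rw [max_eq_left hu.le, le_div_iff₀ hse]
    have h1 : s * u ≤ Real.exp (s * u - 1) := by
      have := Real.add_one_le_exp (s * u - 1)
      linarith
    have h2 : Real.exp (s * u - 1) * Real.exp 1 = Real.exp (s * u) := by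
      rw [← Real.exp_add]; ring_nf
    nlinarith [Real.exp_pos (1:ℝ), Real.exp_pos (s*u - 1)]

private lemma integral_gaussianReal_eq (m : ℝ) (v : ℝ≥0) (hv : v ≠ 0) (f : ℝ → ℝ) :
    ∫ x, f x ∂(gaussianReal m v) = ∫ x, gaussianPDFReal m v x * f x := by
  rw [gaussianReal_of_var_ne_zero m hv]
  have hpdf : gaussianPDF m v
      = fun x => (((gaussianPDFReal m v x).toNNReal : ℝ≥0) : ℝ≥0∞) := rfl
  rw [hpdf, integral_withDensity_eq_integral_smul
    ((measurable_gaussianPDFReal m v).real_toNNReal) f]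
  refine integral_congr_ae (ae_of_all _ fun x => ?_)
  simp [NNReal.smul_def, Real.coe_toNNReal _ (gaussianPDFReal_nonneg m v x)]

private lemma integrable_gaussianReal_of (m : ℝ) (v : ℝ≥0) (hv : v ≠ 0) (f : ℝ → ℝ)
    (hf : AEStronglyMeasurable f volume)
    (hint : Integrable (fun x => gaussianPDFReal m v x * f x) volume) :
    Integrable f (gaussianReal m v) := by
  rw [gaussianReal_of_var_ne_zero m hv]
  have hpdf : gaussianPDF m v
      = fun x => (((gaussianPDFReal m v x).toNNReal : ℝ≥0) : ℝ≥0∞) := rfl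
  rw [hpdf, integrable_withDensity_iff_integrable_smul
    ((measurable_gaussianPDFReal m v).real_toNNReal)]
  refine hint.congr (ae_of_all _ fun x => ?_)
  simp [NNReal.smul_def, Real.coe_toNNReal _ (gaussianPDFReal_nonneg m v x)]

set_option maxHeartbeats 1000000 in
/-- Gaussian integral bound on the Jacobian entry `A₂` of the linearized
one-dimensional Gaussian approximate Fisher–Rao gradient flow: with
`γ = N(m⋆, C⋆)`, `α ≤ h ≤ β` and `∫ h dγ = 1/C⋆`, one has
`∫ h(θ)(θ − m⋆)² dγ(θ) ≤ (4 + 4/√π)(1 + log(β/α))`. -/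
theorem gaussian_fisherRao_jacobian_entry_bound
    (α β Cstar mstar : ℝ)
    (hα : 0 < α) (hαβ : α ≤ β) (hCstar : 0 < Cstar)
    (h : ℝ → ℝ) (hmeas : Measurable h)
    (hbound : ∀ θ, α ≤ h θ ∧ h θ ≤ β)
    (hstat : ∫ θ, h θ ∂(gaussianReal mstar Cstar.toNNReal) = 1 / Cstar) :
    ∫ θ, h θ * (θ - mstar) ^ 2 ∂(gaussianReal mstar Cstar.toNNReal) ≤
      (4 + 4 / Real.sqrt Real.pi) * (1 + Real.log (β / α)) := by
  have hβ : 0 < β := hα.trans_le hαβ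
  set v : ℝ≥0 := Cstar.toNNReal with hvdef
  have hvC : (v : ℝ) = Cstar := Real.coe_toNNReal _ hCstar.le
  have hvne : v ≠ 0 := by
    intro hc
    rw [hc] at hvC
    simp at hvC
    exact hCstar.ne' hvC.symm
  set μ := gaussianReal mstar v with hμdef
  -- h is integrable and bounded
  have hh_nonneg : ∀ x, 0 ≤ h x := fun x => hα.le.trans (hbound x).1
  have hint_h : Integrable h μ := by
    refine (integrable_const β).mono' hmeas.aestronglyMeasurable (ae_of_all _ fun x => ?_)
    rw [Real.norm_eq_abs, abs_of_nonneg (hh_nonneg x)]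
    exact (hbound x).2
  -- C⋆ ≤ 1/α
  have hαC : α * Cstar ≤ 1 := by
    have h1 : α ≤ 1 / Cstar := by
      calc α = ∫ _, α ∂μ := by simp
        _ ≤ ∫ x, h x ∂μ := integral_mono (integrable_const α) hint_h fun x => (hbound x).1
        _ = 1 / Cstar := hstat
    rw [le_div_iff₀ hCstar] at h1
    linarith
  -- parameters
  set s : ℝ := 2 / (5 * Cstar) with hsdef
  have hs : 0 < s := by positivity
  set L : ℝ := max (Real.log (β / α)) 1 with hLdef
  have hlog0 : 0 ≤ Real.log (β / α) :=
    Real.log_nonneg ((one_le_div hα).mpr hαβ)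
  have hL1 : 1 ≤ L := le_max_right _ _
  set A2 : ℝ := (5 / 2) * Cstar * L with hA2def
  have hsA2 : s * A2 = L := by
    rw [hsdef, hA2def]
    field_simp
  -- the Gaussian exponential integral
  set g : ℝ → ℝ := fun x => Real.exp (s * (x - mstar) ^ 2) with hgdef
  have hprod : ∀ x, gaussianPDFReal mstar v x * g x
      = (Real.sqrt (2 * Real.pi * Cstar))⁻¹
        * Real.exp (-(1 / (10 * Cstar)) * (x - mstar) ^ 2) := by
    intro x
    rw [gaussianPDFReal, hvC]
    rw [mul_assoc, ← Real.exp_add]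
    congr 2
    rw [hsdef]
    have hCne : Cstar ≠ 0 := hCstar.ne'
    field_simp
    ring
  have hb : (0:ℝ) < 1 / (10 * Cstar) := by positivity
  have hint_exp : Integrable (fun x => gaussianPDFReal mstar v x * g x) volume := by
    simp_rw [hprod]
    exact ((integrable_exp_neg_mul_sq hb).comp_sub_right mstar).const_mul _
  have hg_int : Integrable g μ := by
    have hgm : AEStronglyMeasurable g volume := by
      rw [hgdef]
      exact (Real.measurable_exp.comp (by fun_prop)).aestronglyMeasurable
    exact integrable_gaussianReal_of mstar v hvne g hgm hint_exp
  have hg_val : ∫ x, g x ∂μ = Real.sqrt 5 := by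
    rw [hμdef, integral_gaussianReal_eq mstar v hvne g]
    simp_rw [hprod]
    rw [integral_const_mul]
    rw [integral_sub_right_eq_self
      (fun a => Real.exp (-(1 / (10 * Cstar)) * a ^ 2)) mstar]
    rw [integral_gaussian]
    have h10 : Real.pi / (1 / (10 * Cstar)) = 5 * (2 * Real.pi * Cstar) := by
      field_simp
      ring
    rw [h10, Real.sqrt_mul (by norm_num : (0:ℝ) ≤ 5)]
    have hne : Real.sqrt (2 * Real.pi * Cstar) ≠ 0 := by
      refine (Real.sqrt_pos.mpr ?_).ne'
      positivity
    rw [mul_comm (Real.sqrt 5), ← mul_assoc, inv_mul_cancel₀ hne, one_mul]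
  -- pointwise bound
  set K : ℝ := β / (s * Real.exp 1) * Real.exp (-(s * A2)) with hKdef
  have hK : 0 ≤ K := by positivity
  have hpt : ∀ x, h x * (x - mstar) ^ 2 ≤ A2 * h x + K * g x := by
    intro x
    have hA2L : 0 < A2 := by
      have : (0:ℝ) < L := lt_of_lt_of_le one_pos hL1
      positivity
    set u : ℝ := (x - mstar) ^ 2 - A2 with hudef
    have step1 : h x * (x - mstar) ^ 2 ≤ A2 * h x + β * max u 0 := by
      rcases le_or_gt ((x - mstar) ^ 2) A2 with hle | hgt
      · have h1 : h x * (x - mstar) ^ 2 ≤ h x * A2 :=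
          mul_le_mul_of_nonneg_left hle (hh_nonneg x)
        have h2 : 0 ≤ β * max u 0 := mul_nonneg hβ.le (le_max_right _ _)
        nlinarith
      · have hu0 : 0 ≤ u := by simp [hudef]; linarith
        rw [max_eq_left hu0]
        have h3 : h x * u ≤ β * u := mul_le_mul_of_nonneg_right (hbound x).2 hu0
        have hexp : h x * (x - mstar) ^ 2 = h x * u + h x * A2 := by
          rw [hudef]; ring
        nlinarith [hexp]
    have step2 : β * max u 0 ≤ K * g x := by
      have h4 := max_le_exp_div u hs
      have h5 : Real.exp (s * u) = Real.exp (-(s * A2)) * g x := by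
        rw [hgdef, ← Real.exp_add]
        congr 1
        rw [hudef]
        ring
      have h6 : β * max u 0 ≤ β * (Real.exp (s * u) / (s * Real.exp 1)) :=
        mul_le_mul_of_nonneg_left h4 hβ.le
      rw [h5] at h6
      calc β * max u 0 ≤ β * (Real.exp (-(s * A2)) * g x / (s * Real.exp 1)) := h6
        _ = K * g x := by rw [hKdef]; ring
    linarith
  -- integrate
  have hint_rhs : Integrable (fun x => A2 * h x + K * g x) μ :=
    (hint_h.const_mul A2).add (hg_int.const_mul K)
  have hint_lhs : Integrable (fun x => h x * (x - mstar) ^ 2) μ := by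
    refine hint_rhs.mono' ((hmeas.mul (by fun_prop)).aestronglyMeasurable)
      (ae_of_all _ fun x => ?_)
    rw [Real.norm_eq_abs, abs_of_nonneg (mul_nonneg (hh_nonneg x) (sq_nonneg _))]
    exact hpt x
  have hmain : ∫ x, h x * (x - mstar) ^ 2 ∂μ ≤ A2 / Cstar + K * Real.sqrt 5 := by
    calc ∫ x, h x * (x - mstar) ^ 2 ∂μ ≤ ∫ x, (A2 * h x + K * g x) ∂μ :=
          integral_mono hint_lhs hint_rhs hpt
      _ = A2 * ∫ x, h x ∂μ + K * ∫ x, g x ∂μ := by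
          rw [integral_add (hint_h.const_mul A2) (hg_int.const_mul K),
            integral_const_mul, integral_const_mul]
      _ = A2 / Cstar + K * Real.sqrt 5 := by
          rw [hstat, hg_val]; ring
  -- numeric estimates
  have hA2C : A2 / Cstar = (5 / 2) * L := by
    field_simp [hA2def]
    ring
  have hexpL : Real.exp (-(s * A2)) = Real.exp (-L) := by rw [hsA2]
  have hβC : β * Cstar ≤ Real.exp L := by
    have h1 : β * Cstar ≤ β / α := by
      rw [le_div_iff₀ hα]
      calc β * Cstar * α = β * (α * Cstar) := by ring
        _ ≤ β * 1 := mul_le_mul_of_nonneg_left hαC hβ.le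
        _ = β := mul_one β
    have h2 : β / α ≤ Real.exp L := by
      have : β / α = Real.exp (Real.log (β / α)) :=
        (Real.exp_log (by positivity)).symm
      rw [this]
      exact Real.exp_le_exp.mpr (le_max_left _ _)
    linarith
  have hKbound : K ≤ 5 / (2 * Real.exp 1) := by
    have he1 : (0:ℝ) < Real.exp 1 := Real.exp_pos 1
    have hKeq : K = (β * Cstar * Real.exp (-L)) * (5 / (2 * Real.exp 1)) := by
      rw [hKdef, hexpL, hsdef]
      field_simp
    have h1 : β * Cstar * Real.exp (-L) ≤ 1 := by
      rw [Real.exp_neg]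
      have hLpos : (0:ℝ) < Real.exp L := Real.exp_pos L
      rw [mul_inv_le_iff₀ hLpos, one_mul]
      exact hβC
    have hpos : (0:ℝ) ≤ 5 / (2 * Real.exp 1) := by positivity
    rw [hKeq]
    calc β * Cstar * Real.exp (-L) * (5 / (2 * Real.exp 1))
        ≤ 1 * (5 / (2 * Real.exp 1)) := mul_le_mul_of_nonneg_right h1 hpos
      _ = 5 / (2 * Real.exp 1) := one_mul _
  -- assemble
  have hs5 : Real.sqrt 5 ≤ 9 / 4 := by
    nlinarith [Real.sq_sqrt (show (0:ℝ) ≤ 5 by norm_num), Real.sqrt_nonneg 5]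
  have hK5 : K * Real.sqrt 5 ≤ 9 / 4 := by
    have he : (5:ℝ) / 2 ≤ Real.exp 1 := by
      have := Real.exp_one_gt_d9
      linarith
    have h1 : K * Real.sqrt 5 ≤ 5 / (2 * Real.exp 1) * (9 / 4) :=
      mul_le_mul hKbound hs5 (Real.sqrt_nonneg 5) (by positivity)
    have h2 : 5 / (2 * Real.exp 1) * (9 / 4) ≤ 9 / 4 := by
      rw [div_mul_eq_mul_div, div_le_iff₀ (by positivity)]
      linarith
    linarith
  have hπ2 : Real.sqrt Real.pi ≤ 2 := by
    nlinarith [Real.sq_sqrt Real.pi_pos.le, Real.sqrt_nonneg Real.pi,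
      Real.pi_le_four]
  have hπpos : (0:ℝ) < Real.sqrt Real.pi := Real.sqrt_pos.mpr Real.pi_pos
  have h4π : (2:ℝ) ≤ 4 / Real.sqrt Real.pi := by
    rw [le_div_iff₀ hπpos]
    nlinarith
  set M : ℝ := 1 + Real.log (β / α) with hMdef
  have hM1 : (1:ℝ) ≤ M := by rw [hMdef]; linarith
  have hLM : L ≤ M := max_le (by rw [hMdef]; linarith) hM1
  have hKnn : 0 ≤ K * Real.sqrt 5 := mul_nonneg hK (Real.sqrt_nonneg 5)
  calc ∫ x, h x * (x - mstar) ^ 2 ∂μ ≤ A2 / Cstar + K * Real.sqrt 5 := hmain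
    _ = (5 / 2) * L + K * Real.sqrt 5 := by rw [hA2C]
    _ ≤ (5 / 2) * M + (9 / 4) * M := by
        have e1 : (5 / 2) * L ≤ (5 / 2) * M :=
          mul_le_mul_of_nonneg_left hLM (by norm_num)
        have e2 : (9 / 4 : ℝ) ≤ (9 / 4) * M := by linarith
        linarith
    _ = (19 / 4) * M := by ring
    _ ≤ (4 + 4 / Real.sqrt Real.pi) * M := by
        have e3 : (19 / 4 : ℝ) ≤ 4 + 4 / Real.sqrt Real.pi := by linarith
        have e4 : (0:ℝ) ≤ M := by linarith
        exact mul_le_mul_of_nonneg_right e3 e4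
end

section
/- Let K ≥ 1 be an integer and let x : [0,∞) → ℝ be differentiable with x'(t) = −x(t)·(x(t) − 1)^{2K+1} for all t ≥ 0, and suppose 1 < x(t) ≤ 2 for all t ≥ 0. Then for every t ≥ 0, x(t) − 1 ≥ ((x(0) − 1)^{−2K} + 4K·t)^{−1/(2K)}. In particular, x(t) converges to the stationary point 1 no faster than the algebraic rate t^{−1/(2K)}. -/
/-!
The substitution `y = (x - 1)^(-2K)` linearises the equation: `y' = 2K x`, and `x ≤ 2` gives
`y' ≤ 4K`. Hence `y t ≤ y 0 + 4K t`, which is the claimed bound after taking the power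
`-1/(2K)`.
-/

open Real Set

theorem hasDerivAt_rpow_neg_natCast_of_hasDerivAt {u : ℝ → ℝ} {v t : ℝ} (n : ℕ)
    (hu : HasDerivAt u (-v * u t ^ (n + 1)) t) (hpos : 0 < u t) :
    HasDerivAt (fun s => u s ^ (-(n : ℝ))) (n * v) t := by
  convert hu.rpow_const (p := -(n : ℝ)) (Or.inl hpos.ne') using 1
  have hpow : u t ^ (n + 1) * u t ^ (-(n : ℝ) - 1) = 1 := by
    rw [← rpow_natCast, ← rpow_add hpos, Nat.cast_succ]
    simp
  linear_combination (-(n : ℝ) * v) * hpow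

theorem le_add_mul_of_hasDerivAt_le_on_Ici {f f' : ℝ → ℝ} {a C t : ℝ}
    (hf : ∀ s, a ≤ s → HasDerivAt f (f' s) s) (hle : ∀ s, a ≤ s → f' s ≤ C) (ht : a ≤ t) :
    f t ≤ f a + C * (t - a) := by
  have hmvt := (convex_Ici a).image_sub_le_mul_sub_of_deriv_le
    (fun s hs => (hf s hs).continuousAt.continuousWithinAt)
    (fun s hs => (hf s (interior_subset hs)).differentiableAt.differentiableWithinAt)
    (fun s hs => (hf s (interior_subset hs)).deriv ▸ hle s (interior_subset hs))
    a self_mem_Ici t ht ht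
  linarith

/-- Arbitrarily slow algebraic convergence of the covariance of Gaussian
approximate gradient flows for a suitable non-logconcave target: if
`x' = −x (x − 1)^{2K+1}` with `1 < x(t) ≤ 2` for all `t ≥ 0`, then
`x(t) − 1 ≥ ((x(0) − 1)^{−2K} + 4Kt)^{−1/(2K)}` for every `t ≥ 0`. -/
theorem gaussian_flow_slow_convergence_lower_bound
    (K : ℕ) (hK : 1 ≤ K)
    (x : ℝ → ℝ)
    (hderiv : ∀ t : ℝ, 0 ≤ t →
      HasDerivAt x (-x t * (x t - 1) ^ (2 * K + 1)) t)
    (hbound : ∀ t : ℝ, 0 ≤ t → 1 < x t ∧ x t ≤ 2) :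
    ∀ t : ℝ, 0 ≤ t →
      ((x 0 - 1) ^ (-(2 * (K : ℝ))) + 4 * (K : ℝ) * t) ^ (-(1 / (2 * (K : ℝ)))) ≤
        x t - 1 := by
  intro t ht
  have hpos : ∀ s, 0 ≤ s → 0 < x s - 1 := fun s hs => sub_pos.2 (hbound s hs).1
  have hK' : (0 : ℝ) < 2 * K := by positivity
  have hy : ∀ s, 0 ≤ s →
      HasDerivAt (fun s => (x s - 1) ^ (-(2 * (K : ℝ)))) (2 * K * x s) s := by
    intro s hs
    simpa using hasDerivAt_rpow_neg_natCast_of_hasDerivAt (2 * K)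
      ((hderiv s hs).sub_const 1) (hpos s hs)
  have hgrowth := le_add_mul_of_hasDerivAt_le_on_Ici hy
    (fun s hs => mul_le_mul_of_nonneg_left (hbound s hs).2 hK'.le) ht
  have hbase : 0 < (x 0 - 1) ^ (-(2 * (K : ℝ))) + 4 * K * t := by
    have := hpos 0 le_rfl
    positivity
  rw [show -(1 / (2 * (K : ℝ))) = (-(2 * K : ℝ))⁻¹ by ring,
    rpow_inv_le_iff_of_neg hbase (hpos t ht) (by linarith)]
  linarith
end
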